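/- arXiv:1911.02661 — 3 statements merged into one kernel-verified Lean document; each statement's English description precedes it below -/
import Mathlib

section
/- There exists k₀ such that for every integer k ≥ k₀ the following holds. Let G be a finite simple graph with list-assignment L such that Σ_{v∈V(G)}(Save_L(v) + ε·log^10 k) ≤ Σ_{v∈V(G)}(2ε·Gap(v) − 7ε(k − |L(v)|)), |L(v)| ≤ min{d(v), k} for every vertex v, and no induced subgraph of G is dense with respect to L. Then either (a) G is saved with respect to L and k, or (b) there is a nonempty set D ⊊ V(G) such that Σ_{v∈V(G)∖D}(Save_L(v) + ε·log^10 k) ≤ Σ_{v∈V(G)∖D}(2ε·Gap_{G−D}(v) − 7ε(k − |L(v)| + |N(v) ∩ D|)), where Gap_{G−D}(v) = d_{G−D}(v) + 1 − ω_{G−D}(v) with degree and largest clique containing v computed in the induced subgraph G − D, while Save_L(v), d(v), N(v) are computed in G. -/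
open scoped Classical

noncomputable section

namespace KP

variable {V : Type} [Fintype V]

/-- Degree of a vertex. -/
def deg (G : SimpleGraph V) (v : V) : ℕ := (G.neighborSet v).ncard

/-- Degree of `v` within the induced subgraph on the vertex set `S`. -/
def degOn (G : SimpleGraph V) (S : Set V) (v : V) : ℕ := (G.neighborSet v ∩ S).ncard

/-- The number of vertices of a largest clique of `G` containing `v`. -/
def omegaAt (G : SimpleGraph V) (v : V) : ℕ :=
  sSup {n | ∃ t : Finset V, G.IsNClique n t ∧ v ∈ t}

/-- The number of vertices of a largest clique containing `v` in the induced subgraph on `S`. -/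
def omegaAtOn (G : SimpleGraph V) (S : Set V) (v : V) : ℕ :=
  sSup {n | ∃ t : Finset V, ↑t ⊆ S ∧ G.IsNClique n t ∧ v ∈ t}

/-- `Gap(v) = d(v) + 1 - ω(v)`, as a real number. -/
def GapR (G : SimpleGraph V) (v : V) : ℝ := (deg G v : ℝ) + 1 - (omegaAt G v : ℝ)

/-- `Gap` of `v` computed in the induced subgraph on `S`. -/
def GapOnR (G : SimpleGraph V) (S : Set V) (v : V) : ℝ :=
  (degOn G S v : ℝ) + 1 - (omegaAtOn G S v : ℝ)

/-- `Save_L(v) = d(v) + 1 - |L(v)|`, as a real number. -/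
def SaveR (G : SimpleGraph V) (L : V → Finset ℕ) (v : V) : ℝ :=
  (deg G v : ℝ) + 1 - ((L v).card : ℝ)

/-- `log^10 k`, natural logarithm. -/
def logTen (k : ℕ) : ℝ := (Real.log k) ^ 10

/-- The induced subgraph on `S` admits a proper coloring from the lists `L`. -/
def ListColorableOn (G : SimpleGraph V) (L : V → Finset ℕ) (S : Set V) : Prop :=
  ∃ φ : V → ℕ, (∀ v ∈ S, φ v ∈ L v) ∧ ∀ u ∈ S, ∀ w ∈ S, G.Adj u w → φ u ≠ φ w

/-- `G` is `L`-colorable. -/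
def ListColorable (G : SimpleGraph V) (L : V → Finset ℕ) : Prop :=
  ListColorableOn G L Set.univ

/-- `G` is `L`-critical: it is not `L`-colorable, but every proper induced subgraph is. -/
def ListCritical (G : SimpleGraph V) (L : V → Finset ℕ) : Prop :=
  ¬ ListColorable G L ∧ ∀ S : Set V, S ⊂ Set.univ → ListColorableOn G L S

/-- The number of unordered pairs of distinct nonadjacent vertices of `S`. -/
def nonadjPairs (G : SimpleGraph V) (S : Set V) : ℕ :=
  {e : Sym2 V | ∃ u w : V, u ∈ S ∧ w ∈ S ∧ u ≠ w ∧ ¬ G.Adj u w ∧ e = s(u, w)}.ncard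

/-- `K = 0.999·e^(−1/(1−ε'))`. -/
def Kc (ε' : ℝ) : ℝ := 0.999 * Real.exp (-1 / (1 - ε'))

/-- `C_ab = Kα(1−ε')/(1+α)`. -/
def Cab (K α ε' : ℝ) : ℝ := K * α * (1 - ε') / (1 + α)

/-- `C_eg = K(1−ε')·((1−2δ)K/(1+α)^2 − 1/(3(1−δ)^2(1−ε')^2))`. -/
def Ceg (K α δ ε' : ℝ) : ℝ :=
  K * (1 - ε') * ((1 - 2 * δ) * K / (1 + α) ^ 2 - 1 / (3 * (1 - δ) ^ 2 * (1 - ε') ^ 2))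

/-- `C_bs = K^2(1−ε')·((δ−ε')/(1−ε') − 15δ/16)·((1−σ−δ)/((1+α)(1−δ)))`. -/
def Cbs (K α δ ε' σ : ℝ) : ℝ :=
  K ^ 2 * (1 - ε') * ((δ - ε') / (1 - ε') - 15 * δ / 16) *
    ((1 - σ - δ) / ((1 + α) * (1 - δ)))

/-- Subservient neighbors of `v`. -/
def Subserv (G : SimpleGraph V) (L : V → Finset ℕ) (δ : ℝ) (v : V) : Set V :=
  {u | G.Adj v u ∧ ((L u).card : ℝ) < (1 - δ) * ((L v).card : ℝ)}

/-- Egalitarian neighbors of `v`. -/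
def Egal (G : SimpleGraph V) (L : V → Finset ℕ) (δ α : ℝ) (v : V) : Set V :=
  {u | G.Adj v u ∧ (1 - δ) * ((L v).card : ℝ) ≤ ((L u).card : ℝ) ∧
    ((L u).card : ℝ) < (1 + α) * ((L v).card : ℝ)}

/-- Lordlier neighbors of `v`. -/
def Lord (G : SimpleGraph V) (L : V → Finset ℕ) (α : ℝ) (v : V) : Set V :=
  {u | G.Adj v u ∧ (1 + α) * ((L v).card : ℝ) ≤ ((L u).card : ℝ)}

/-- Slightly lordlier neighbors of `v`. -/
def SlLord (G : SimpleGraph V) (L : V → Finset ℕ) (α : ℝ) (v : V) : Set V :=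
  {u | G.Adj v u ∧ ((L v).card : ℝ) + α * GapR G v ≤ ((L u).card : ℝ)}

/-- `σ`-egalitarian neighbors of `v`. -/
def EgalSigma (G : SimpleGraph V) (L : V → Finset ℕ) (σ : ℝ) (v : V) : Set V :=
  {u | G.Adj v u ∧ (1 - σ) * ((L v).card : ℝ) ≤ ((L u).card : ℝ)}

/-- `v` is aberrant with respect to `L` and `k`. -/
def Aberrant (G : SimpleGraph V) (L : V → Finset ℕ) (α ε' K : ℝ) (k : ℕ) (v : V) : Prop :=
  ((Lord G L α v).ncard : ℝ) ≥ (SaveR G L v + 11 * ε' * logTen k) / Cab K α ε'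

/-- `v` is slightly aberrant with respect to `L` and `k`. -/
def SlightlyAberrant (G : SimpleGraph V) (L : V → Finset ℕ) (α ε' K : ℝ) (k : ℕ) (v : V) :
    Prop :=
  GapR G v * ((SlLord G L α v).ncard : ℝ) ≥
    (deg G v : ℝ) * ((SaveR G L v + 11 * ε' * logTen k) / Cab K α ε')

/-- `v` is egalitarian-sparse with respect to `L` and `k`. -/
def EgalSparse (G : SimpleGraph V) (L : V → Finset ℕ) (α δ ε' K : ℝ) (k : ℕ) (v : V) : Prop :=
  ((nonadjPairs G (Egal G L δ α v)) : ℝ) ≥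
    (deg G v : ℝ) * ((SaveR G L v + 11 * ε' * logTen k) / Ceg K α δ ε')

/-- `(A, B)` is a half-egalitarian bipartition for `v`. -/
def HalfEgalBipartition (G : SimpleGraph V) (L : V → Finset ℕ) (α δ ε' σ : ℝ) (v : V)
    (A B : Set V) : Prop :=
  Disjoint A B ∧ A ⊆ G.neighborSet v ∧ B ⊆ G.neighborSet v ∧
  B ⊆ Egal G L δ α v ∧ A ⊆ EgalSigma G L σ v ∩ Subserv G L δ v ∧
  ∀ u ∈ A, (({w ∈ B | ¬ G.Adj u w}).ncard : ℝ) ≥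
    ((δ - ε') / (1 - ε') - 15 * δ / 16) * (deg G v : ℝ)

/-- `v` is bipartite-sparse with respect to `L` and `k`. -/
def BipSparse (G : SimpleGraph V) (L : V → Finset ℕ) (α δ ε' σ K : ℝ) (k : ℕ) (v : V) : Prop :=
  ∃ A B : Set V, HalfEgalBipartition G L α δ ε' σ v A B ∧
    (A.ncard : ℝ) ≥ (SaveR G L v + 11 * ε' * logTen k) / Cbs K α δ ε' σ

/-- `v` is `≺`-prioritized with respect to `L` and `k`. -/
def Prioritized (G : SimpleGraph V) (L : V → Finset ℕ) (ε' K : ℝ) (k : ℕ)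
    (r : V → V → Prop) (v : V) : Prop :=
  (({u | G.Adj v u ∧ r v u}).ncard : ℝ) ≥
    (SaveR G L v + ε' * logTen k) / ((1 - K) * (1 - ε'))

/-- `G` is saved with respect to `L` and `k`. -/
def SavedWrt (G : SimpleGraph V) (L : V → Finset ℕ) (α δ ε' σ K : ℝ) (k : ℕ) : Prop :=
  (∀ v, (L v).card ≤ k) ∧
  (∀ v, (1 - ε') * (deg G v : ℝ) ≤ ((L v).card : ℝ) ∧ (L v).card ≤ deg G v) ∧
  ∃ r : V → V → Prop, IsStrictTotalOrder V r ∧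
    ∀ v, Aberrant G L α ε' K k v ∨ SlightlyAberrant G L α ε' K k v ∨
      EgalSparse G L α δ ε' K k v ∨ BipSparse G L α δ ε' σ K k v ∨
      Prioritized G L ε' K k r v

/-- The charge of a vertex. -/
def chR (G : SimpleGraph V) (L : V → Finset ℕ) (ε : ℝ) (k : ℕ) (v : V) : ℝ :=
  SaveR G L v - 2 * ε * GapR G v + ε * logTen k + 7 * ε * ((k : ℝ) - ((L v).card : ℝ))

/-- `v` is heavy. -/
def Heavy (G : SimpleGraph V) (L : V → Finset ℕ) (ε δ : ℝ) (k : ℕ) (v : V) : Prop :=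
  chR G L ε k v ≥ (36 * ε / δ) * GapR G v

/-- `v` is extremely heavy. -/
def ExtremelyHeavy (G : SimpleGraph V) (L : V → Finset ℕ) (ε : ℝ) (k : ℕ) (v : V) : Prop :=
  chR G L ε k v ≥ 9 * ε * (deg G v : ℝ)

/-- `v` is very lordly. -/
def VeryLordly (G : SimpleGraph V) (L : V → Finset ℕ) (δ : ℝ) (v : V) : Prop :=
  GapR G v ≥ (3 * δ / 4) * (deg G v : ℝ) ∧
  ((Subserv G L δ v).ncard : ℝ) > GapR G v / 4

/-- `v` is sponsored. -/
def Sponsored (G : SimpleGraph V) (L : V → Finset ℕ) (ε ε' α δ : ℝ) (k : ℕ) (v : V) : Prop :=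
  (({u | u ∈ G.neighborSet v ∧ Heavy G L ε δ k u ∧
      SaveR G L u ≥ (ε * (5 / 2 - α) / (δ / (36 + 2 * δ) - ε)) * GapR G v ∧
      (deg G u : ℝ) ≤ ((1 + α * δ / 4) / (1 - ε')) * (deg G v : ℝ)}).ncard : ℝ) ≥
    (deg G v : ℝ) / 2

/-- `M` is a matching in the complement of the induced subgraph on `T`. -/
def IsAntiMatchingOn (G : SimpleGraph V) (T : Set V) (M : Finset (Sym2 V)) : Prop :=
  (∀ e ∈ M, ∀ x ∈ e, x ∈ T) ∧
  (∀ e ∈ M, ¬ e.IsDiag) ∧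
  (∀ e ∈ M, ∀ u w : V, e = s(u, w) → ¬ G.Adj u w) ∧
  (∀ e ∈ M, ∀ f ∈ M, e ≠ f → ∀ x ∈ e, x ∉ f)

/-- The induced subgraph on `T` is dense with respect to `L`. -/
def DenseWrt (G : SimpleGraph V) (L : V → Finset ℕ) (T : Finset V) : Prop :=
  ∃ M : Finset (Sym2 V), IsAntiMatchingOn G (↑T : Set V) M ∧
    ((nonadjPairs G (↑T : Set V)) : ℝ) <
      (M.card : ℝ) * ((T.card : ℝ) - (M.card : ℝ)) - ∑ u ∈ T, SaveR G L u

/-- The fixed parameters. -/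
def eps0 : ℝ := 2.6e-10
def eps0' : ℝ := 11 * eps0
def del0 : ℝ := 1 / 100
def alp0 : ℝ := (del0 * (2 + eps0') - 4 * eps0') / (4 - 3 * del0)
def K0 : ℝ := Kc eps0'
def sig0 : ℝ := 2 / 3

section AuxBasic

lemma coeNbr (G : SimpleGraph V) (v : V) : (↑(G.neighborFinset v) : Set V) = G.neighborSet v := by
  rw [SimpleGraph.neighborFinset_def, Set.coe_toFinset]

lemma deg_eq_card (G : SimpleGraph V) (v : V) : deg G v = (G.neighborFinset v).card := by
  rw [deg, ← Set.ncard_coe_finset, coeNbr]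

lemma ncard_inter_eq (G : SimpleGraph V) (v : V) (D : Finset V) :
    (G.neighborSet v ∩ (↑D : Set V)).ncard = (G.neighborFinset v ∩ D).card := by
  rw [← Set.ncard_coe_finset, Finset.coe_inter, coeNbr]

lemma ncard_diff_eq (G : SimpleGraph V) (v : V) (D : Finset V) :
    (G.neighborFinset v \ D).card + (G.neighborFinset v ∩ D).card = deg G v := by
  rw [deg_eq_card]
  exact Finset.card_sdiff_add_card_inter _ _

lemma bddAbove_cliques (G : SimpleGraph V) (v : V) :
    BddAbove {n | ∃ t : Finset V, G.IsNClique n t ∧ v ∈ t} := by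
  refine ⟨Fintype.card V, ?_⟩
  rintro n ⟨t, ht, -⟩
  rw [← ht.2]
  exact t.card_le_univ

lemma le_omegaAt {G : SimpleGraph V} {v : V} {n : ℕ} {t : Finset V}
    (h : G.IsNClique n t) (hv : v ∈ t) : n ≤ omegaAt G v :=
  le_csSup (bddAbove_cliques G v) ⟨t, h, hv⟩

lemma one_le_omegaAt (G : SimpleGraph V) (v : V) : 1 ≤ omegaAt G v :=
  le_omegaAt (SimpleGraph.isNClique_singleton.mpr rfl) (Finset.mem_singleton_self v)

lemma omegaAt_le (G : SimpleGraph V) (v : V) : omegaAt G v ≤ deg G v + 1 := by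
  refine csSup_le ⟨1, {v}, SimpleGraph.isNClique_singleton.mpr rfl, Finset.mem_singleton_self v⟩ ?_
  rintro n ⟨t, ht, hv⟩
  have hsub : t ⊆ insert v (G.neighborFinset v) := by
    intro x hx
    rcases eq_or_ne x v with rfl | hne
    · exact Finset.mem_insert_self _ _
    · exact Finset.mem_insert_of_mem ((G.mem_neighborFinset v x).mpr (ht.1 hv hx hne.symm))
  calc n = t.card := ht.2.symm
    _ ≤ (insert v (G.neighborFinset v)).card := Finset.card_le_card hsub
    _ ≤ (G.neighborFinset v).card + 1 := Finset.card_insert_le _ _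
    _ = deg G v + 1 := by rw [deg_eq_card]

lemma omegaAtOn_le_omegaAt (G : SimpleGraph V) (S : Set V) (v : V) :
    omegaAtOn G S v ≤ omegaAt G v := by
  rcases Set.eq_empty_or_nonempty {n | ∃ t : Finset V, ↑t ⊆ S ∧ G.IsNClique n t ∧ v ∈ t} with he | hne
  · rw [omegaAtOn, he, csSup_empty]
    exact Nat.zero_le _
  · exact csSup_le_csSup (bddAbove_cliques G v) hne (by rintro n ⟨t, -, ht, hv⟩; exact ⟨t, ht, hv⟩)

lemma gapR_le_deg (G : SimpleGraph V) (v : V) : GapR G v ≤ (deg G v : ℝ) := by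
  have := one_le_omegaAt G v
  have : (1 : ℝ) ≤ (omegaAt G v : ℝ) := by exact_mod_cast this
  rw [GapR]; linarith

lemma gapR_nonneg (G : SimpleGraph V) (v : V) : 0 ≤ GapR G v := by
  have := omegaAt_le G v
  have : (omegaAt G v : ℝ) ≤ (deg G v : ℝ) + 1 := by exact_mod_cast this
  rw [GapR]; linarith

lemma gapOnR_ge (G : SimpleGraph V) (D : Finset V) (v : V) :
    GapR G v - ((G.neighborSet v ∩ (↑D : Set V)).ncard : ℝ) ≤ GapOnR G ((↑D : Set V))ᶜ v := by
  have hdeg : degOn G ((↑D : Set V))ᶜ v + (G.neighborSet v ∩ (↑D : Set V)).ncard = deg G v := by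
    rw [degOn, deg, ncard_inter_eq]
    have : G.neighborSet v ∩ ((↑D : Set V))ᶜ = ↑(G.neighborFinset v \ D) := by
      rw [Finset.coe_sdiff, coeNbr]; rfl
    rw [this, Set.ncard_coe_finset, show (G.neighborSet v).ncard = (G.neighborFinset v).card from deg_eq_card G v]
    exact ncard_diff_eq G v D ▸ by rw [deg_eq_card]
  have homega : omegaAtOn G ((↑D : Set V))ᶜ v ≤ omegaAt G v := omegaAtOn_le_omegaAt G _ v
  rw [GapR, GapOnR]
  have h1 : (degOn G ((↑D : Set V))ᶜ v : ℝ) + ((G.neighborSet v ∩ (↑D : Set V)).ncard : ℝ) = (deg G v : ℝ) := by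
    exact_mod_cast hdeg
  have h2 : (omegaAtOn G ((↑D : Set V))ᶜ v : ℝ) ≤ (omegaAt G v : ℝ) := by exact_mod_cast homega
  linarith

end AuxBasic

section AuxCount

open Finset

lemma nbr_inter_eq_filter (G : SimpleGraph V) (v : V) (B : Finset V) :
    G.neighborFinset v ∩ B = B.filter (fun u => G.Adj v u) := by
  ext u
  simp [SimpleGraph.mem_neighborFinset, and_comm]

lemma card_nbr_inter_eq_sum (G : SimpleGraph V) (v : V) (B : Finset V) :
    ((G.neighborFinset v ∩ B).card : ℝ) = ∑ u ∈ B, (if G.Adj v u then (1:ℝ) else 0) := by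
  rw [nbr_inter_eq_filter, Finset.card_filter]
  push_cast
  rfl

lemma sum_card_inter_comm (G : SimpleGraph V) (A B : Finset V) :
    ∑ v ∈ A, ((G.neighborFinset v ∩ B).card : ℝ) = ∑ u ∈ B, ((G.neighborFinset u ∩ A).card : ℝ) := by
  simp_rw [card_nbr_inter_eq_sum]
  rw [Finset.sum_comm]
  refine Finset.sum_congr rfl fun u _ => Finset.sum_congr rfl fun v _ => ?_
  simp [G.adj_comm]

lemma sum_weight_nbr_comm (G : SimpleGraph V) (S : Finset V) (f : V → ℝ) :
    ∑ v ∈ S, ∑ u ∈ G.neighborFinset v ∩ S, f u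
      = ∑ u ∈ S, (f u * ((G.neighborFinset u ∩ S).card : ℝ)) := by
  have h1 : ∀ v ∈ S, ∑ u ∈ G.neighborFinset v ∩ S, f u
      = ∑ u ∈ S, (if G.Adj v u then f u else 0) := by
    intro v _
    rw [nbr_inter_eq_filter, Finset.sum_filter]
  rw [Finset.sum_congr rfl h1, Finset.sum_comm]
  refine Finset.sum_congr rfl fun u _ => ?_
  have h2 : ∀ v ∈ S, (if G.Adj v u then f u else 0) = (if G.Adj u v then f u * 1 else f u * 0) := by
    intro v _; simp [G.adj_comm]
  rw [Finset.sum_congr rfl h2]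
  simp_rw [← mul_ite, ← Finset.mul_sum]
  rw [card_nbr_inter_eq_sum]

/-- The generic lemma producing option (b). -/
lemma generic_D (G : SimpleGraph V) (L : V → Finset ℕ) (k : ℕ) (D : Finset V)
    (hch : ∑ v, chR G L eps0 k v ≤ 0)
    (hD : 9 * eps0 * ∑ u ∈ D, ((G.neighborFinset u \ D).card : ℝ) ≤ ∑ u ∈ D, chR G L eps0 k u) :
    (∑ v ∈ Finset.univ \ D, (SaveR G L v + eps0 * logTen k)) ≤
      ∑ v ∈ Finset.univ \ D, (2 * eps0 * GapOnR G ((↑D : Set V))ᶜ v -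
        7 * eps0 * ((k : ℝ) - ((L v).card : ℝ) +
          ((G.neighborSet v ∩ (↑D : Set V)).ncard : ℝ))) := by
  have heps : (0:ℝ) < eps0 := by norm_num [eps0]
  rw [← sub_nonpos, ← Finset.sum_sub_distrib]
  have hpoint : ∀ v ∈ Finset.univ \ D,
      (SaveR G L v + eps0 * logTen k) -
        (2 * eps0 * GapOnR G ((↑D : Set V))ᶜ v -
          7 * eps0 * ((k : ℝ) - ((L v).card : ℝ) +
            ((G.neighborSet v ∩ (↑D : Set V)).ncard : ℝ)))
      ≤ chR G L eps0 k v + 9 * eps0 * ((G.neighborFinset v ∩ D).card : ℝ) := by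
    intro v _
    have hgap := gapOnR_ge G D v
    have hcast : ((G.neighborSet v ∩ (↑D : Set V)).ncard : ℝ)
        = ((G.neighborFinset v ∩ D).card : ℝ) := by exact_mod_cast ncard_inter_eq G v D
    rw [hcast] at hgap ⊢
    rw [chR]
    nlinarith [hgap]
  calc ∑ v ∈ Finset.univ \ D, _ ≤ ∑ v ∈ Finset.univ \ D,
        (chR G L eps0 k v + 9 * eps0 * ((G.neighborFinset v ∩ D).card : ℝ)) :=
        Finset.sum_le_sum hpoint
    _ = (∑ v ∈ Finset.univ \ D, chR G L eps0 k v)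
        + 9 * eps0 * ∑ v ∈ Finset.univ \ D, ((G.neighborFinset v ∩ D).card : ℝ) := by
        rw [Finset.sum_add_distrib, Finset.mul_sum]
    _ ≤ 0 := by
        have hsplit : ∑ v ∈ Finset.univ \ D, chR G L eps0 k v
            = (∑ v, chR G L eps0 k v) - ∑ v ∈ D, chR G L eps0 k v := by
          rw [Finset.sum_sdiff_eq_sub (Finset.subset_univ D)]
        have hcount : ∑ v ∈ Finset.univ \ D, ((G.neighborFinset v ∩ D).card : ℝ)
            ≤ ∑ u ∈ D, ((G.neighborFinset u \ D).card : ℝ) := by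
          have h1 : ∑ v ∈ Finset.univ \ D, ((G.neighborFinset v ∩ D).card : ℝ)
              = ∑ v, ((G.neighborFinset v ∩ D).card : ℝ)
                - ∑ v ∈ D, ((G.neighborFinset v ∩ D).card : ℝ) := by
            rw [Finset.sum_sdiff_eq_sub (Finset.subset_univ D)]
          have h2 : ∑ v, ((G.neighborFinset v ∩ D).card : ℝ)
              = ∑ u ∈ D, ((G.neighborFinset u ∩ Finset.univ).card : ℝ) :=
            sum_card_inter_comm G Finset.univ D
          have h3 : ∀ u ∈ D, ((G.neighborFinset u ∩ Finset.univ).card : ℝ)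
              - ((G.neighborFinset u ∩ D).card : ℝ) = ((G.neighborFinset u \ D).card : ℝ) := by
            intro u _
            have h5 : ((G.neighborFinset u \ D).card + (G.neighborFinset u ∩ D).card : ℝ)
                = (deg G u : ℝ) := by exact_mod_cast congrArg Nat.cast (ncard_diff_eq G u D)
            have h4 : (G.neighborFinset u ∩ Finset.univ) = G.neighborFinset u := by simp
            rw [h4, deg_eq_card] at *
            push_cast at h5 ⊢
            linarith
          rw [h1, h2, ← Finset.sum_sub_distrib, Finset.sum_congr rfl h3]
        have h9 : 9 * eps0 * ∑ v ∈ Finset.univ \ D, ((G.neighborFinset v ∩ D).card : ℝ)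
            ≤ 9 * eps0 * ∑ u ∈ D, ((G.neighborFinset u \ D).card : ℝ) := by
          apply mul_le_mul_of_nonneg_left hcount
          positivity
        linarith
  done

end AuxCount

section Numeric

lemma eps0_pos : (0:ℝ) < eps0 := by norm_num [eps0]

lemma eps0'_val : eps0' = 2.86e-9 := by norm_num [eps0', eps0]

lemma exp_term_bounds :
    (0.36787943 : ℝ) ≤ Real.exp (-1 / (1 - eps0')) ∧
      Real.exp (-1 / (1 - eps0')) ≤ (0.36787945 : ℝ) := by
  have he1 : (2.7182818283 : ℝ) < Real.exp 1 := Real.exp_one_gt_d9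
  have he2 : Real.exp 1 < (2.7182818286 : ℝ) := Real.exp_one_lt_d9
  have hepos : (0:ℝ) < Real.exp 1 := Real.exp_pos 1
  constructor
  · have harg : (-1 - 6e-9 : ℝ) ≤ -1 / (1 - eps0') := by
      rw [eps0'_val, le_div_iff₀ (by norm_num : (0:ℝ) < 1 - 2.86e-9)]
      norm_num
    calc (0.36787943 : ℝ) ≤ (Real.exp 1)⁻¹ * (1 - 6e-9) := by
          have h3 : (1/2.7182818286 : ℝ) ≤ (Real.exp 1)⁻¹ := by
            rw [one_div]
            exact inv_anti₀ hepos he2.le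
          nlinarith [h3]
      _ ≤ Real.exp (-1) * Real.exp (-6e-9) := by
          rw [Real.exp_neg]
          have : (1 : ℝ) - 6e-9 ≤ Real.exp (-6e-9) := by
            have := Real.add_one_le_exp (-6e-9 : ℝ)
            linarith
          nlinarith [inv_pos.mpr hepos]
      _ = Real.exp (-1 - 6e-9) := by rw [← Real.exp_add]; norm_num
      _ ≤ Real.exp (-1 / (1 - eps0')) := Real.exp_le_exp.mpr harg
  · have harg : -1 / (1 - eps0') ≤ (-1 : ℝ) := by
      rw [eps0'_val, div_le_iff₀ (by norm_num : (0:ℝ) < 1 - 2.86e-9)]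
      norm_num
    calc Real.exp (-1 / (1 - eps0')) ≤ Real.exp (-1) := Real.exp_le_exp.mpr harg
      _ = (Real.exp 1)⁻¹ := Real.exp_neg 1
      _ ≤ (2.7182818283 : ℝ)⁻¹ := inv_anti₀ (by norm_num) he1.le
      _ ≤ 0.36787945 := by norm_num

lemma K0_bounds : (0.3675 : ℝ) ≤ K0 ∧ K0 ≤ (0.3676 : ℝ) := by
  obtain ⟨h1, h2⟩ := exp_term_bounds
  constructor
  · calc (0.3675 : ℝ) ≤ 0.999 * 0.36787943 := by norm_num
      _ ≤ K0 := by rw [K0, Kc]; nlinarith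
  · calc K0 ≤ 0.999 * 0.36787945 := by rw [K0, Kc]; nlinarith
      _ ≤ 0.3676 := by norm_num

lemma prioDen_bounds : (1/2 : ℝ) ≤ (1 - K0) * (1 - eps0') ∧ (1 - K0) * (1 - eps0') ≤ 1 := by
  obtain ⟨h1, h2⟩ := K0_bounds
  rw [eps0'_val]
  constructor <;> nlinarith

lemma alp0_bounds : (0.005037 : ℝ) ≤ alp0 ∧ alp0 ≤ (0.005038 : ℝ) := by
  rw [alp0, del0, eps0', eps0]
  norm_num

lemma Cab_lb : (1/600 : ℝ) ≤ Cab K0 alp0 eps0' := by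
  obtain ⟨hk1, hk2⟩ := K0_bounds
  obtain ⟨ha1, ha2⟩ := alp0_bounds
  rw [Cab, eps0'_val, le_div_iff₀ (by nlinarith : (0:ℝ) < 1 + alp0)]
  nlinarith

lemma Ceg_lb : (1/300 : ℝ) ≤ Ceg K0 alp0 del0 eps0' := by
  obtain ⟨hk1, hk2⟩ := K0_bounds
  obtain ⟨ha1, ha2⟩ := alp0_bounds
  have hA : (0.35653 : ℝ) ≤ (1 - 2 * del0) * K0 / (1 + alp0)^2 := by
    rw [del0, le_div_iff₀ (by nlinarith : (0:ℝ) < (1 + alp0)^2)]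
    nlinarith
  have hB : 1 / (3 * (1 - del0)^2 * (1 - eps0')^2) ≤ (0.340102 : ℝ) := by
    rw [del0, eps0'_val, div_le_iff₀ (by norm_num : (0:ℝ) < 3 * (1 - 1/100:ℝ)^2 * (1 - 2.86e-9)^2)]
    norm_num
  rw [Ceg, eps0'_val] at *
  nlinarith

lemma sub_lord_const : (1 + alp0) * (1 - del0) ≤ 1 := by
  obtain ⟨_, ha2⟩ := alp0_bounds
  rw [del0]
  nlinarith

end Numeric

section Facts

/-- The prioritization threshold. -/
def TTf (G : SimpleGraph V) (L : V → Finset ℕ) (k : ℕ) (v : V) : ℝ :=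
  (SaveR G L v + eps0' * logTen k) / ((1 - K0) * (1 - eps0'))

/-- A vertex with one of the two static certificates we use. -/
def GoodV (G : SimpleGraph V) (L : V → Finset ℕ) (k : ℕ) (v : V) : Prop :=
  Aberrant G L alp0 eps0' K0 k v ∨ EgalSparse G L alp0 del0 eps0' K0 k v

lemma logTen_nonneg (k : ℕ) : 0 ≤ logTen k := by rw [logTen]; positivity

lemma TTf_bounds (G : SimpleGraph V) (L : V → Finset ℕ) (k : ℕ) (v : V)
    (hS : 1 ≤ SaveR G L v) :
    SaveR G L v + eps0' * logTen k ≤ TTf G L k v ∧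
      TTf G L k v ≤ 2 * SaveR G L v + 2 * eps0' * logTen k ∧ 1 ≤ TTf G L k v := by
  obtain ⟨h1, h2⟩ := prioDen_bounds
  have hpos : (0:ℝ) < (1 - K0) * (1 - eps0') := by linarith
  have hl : 0 ≤ logTen k := logTen_nonneg k
  have heps' : (0:ℝ) < eps0' := by rw [eps0'_val]; norm_num
  have hnum : 0 < SaveR G L v + eps0' * logTen k := by nlinarith
  refine ⟨?_, ?_, ?_⟩
  · rw [TTf, le_div_iff₀ hpos]
    nlinarith
  · rw [TTf, div_le_iff₀ hpos]
    nlinarith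
  · rw [TTf, le_div_iff₀ hpos]
    nlinarith

lemma noEH_facts (G : SimpleGraph V) (L : V → Finset ℕ) (k : ℕ) (v : V)
    (hk : 1 ≤ k) (hLv : (L v).card ≤ min (deg G v) k)
    (hch : chR G L eps0 k v < 9 * eps0 * (deg G v : ℝ)) :
    1 ≤ SaveR G L v ∧ SaveR G L v ≤ 11 * eps0 * (deg G v : ℝ) ∧
      logTen k ≤ 11 * (deg G v : ℝ) ∧ (k : ℝ) ≤ 3 * (deg G v : ℝ) ∧
      (deg G v : ℝ) ≤ 2 * (k : ℝ) ∧ (1:ℝ) ≤ (deg G v : ℝ) := by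
  have hgap := gapR_le_deg G v
  have hgap0 := gapR_nonneg G v
  have hl10 : 0 ≤ logTen k := logTen_nonneg k
  have hld : ((L v).card : ℝ) ≤ (deg G v : ℝ) := by
    exact_mod_cast (le_min_iff.mp hLv).1
  have hlk : ((L v).card : ℝ) ≤ (k : ℝ) := by
    exact_mod_cast (le_min_iff.mp hLv).2
  have hkr : (1:ℝ) ≤ (k:ℝ) := by exact_mod_cast hk
  rw [chR, SaveR] at hch
  rw [SaveR]
  have he : eps0 = 2.6e-10 := rfl
  set d := (deg G v : ℝ) with hd
  set l := ((L v).card : ℝ) with hl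
  have hd0 : 0 ≤ d := by rw [hd]; positivity
  have hmain : (d + 1 - l) + eps0 * logTen k + 7 * eps0 * ((k:ℝ) - l) ≤ 11 * eps0 * d := by
    nlinarith [eps0_pos]
  have hS1 : 1 ≤ d + 1 - l := by linarith
  have hS2 : d + 1 - l ≤ 11 * eps0 * d := by nlinarith [eps0_pos]
  rw [he] at hmain hS2
  have hlog : logTen k ≤ 11 * d := by linarith
  have hk3 : (k:ℝ) ≤ 3 * d := by linarith
  have hd2k : d ≤ 2 * (k:ℝ) := by linarith
  have hd1 : (1:ℝ) ≤ d := by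
    have hdnat : 1 ≤ deg G v := by
      rcases Nat.eq_zero_or_pos (deg G v) with h0 | h1
      · exfalso
        rw [hd, h0] at hk3
        simp at hk3
        linarith
      · exact h1
    rw [hd]
    exact_mod_cast hdnat
  rw [he]
  exact ⟨hS1, hS2, hlog, hk3, hd2k, hd1⟩

end Facts

section Order

/-- `S` is a violating set: every member has almost all its neighbours inside `S`. -/
def Viol (G : SimpleGraph V) (L : V → Finset ℕ) (k : ℕ) (S : Finset V) : Prop :=
  ∀ v ∈ S, (deg G v : ℝ) - TTf G L k v ≤ ((G.neighborFinset v ∩ S).card : ℝ)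

lemma greedy (G : SimpleGraph V) (L : V → Finset ℕ) (k : ℕ) :
    ∀ S : Finset V,
      (∃ S' : Finset V, S'.Nonempty ∧ S' ⊆ S ∧ Viol G L k S') ∨
      ∃ g : V → ℕ, (∀ v ∈ S, g v < S.card) ∧ Set.InjOn g (↑S : Set V) ∧
        ∀ v ∈ S, ((G.neighborFinset v ∩ S.filter (fun u => g u < g v)).card : ℝ)
          ≤ (deg G v : ℝ) - TTf G L k v := by
  intro S
  induction S using Finset.strongInduction with
  | _ S ih =>
    rcases Finset.eq_empty_or_nonempty S with rfl | hSne
    · exact Or.inr ⟨fun _ => 0, by simp, by simp, by simp⟩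
    by_cases hviol : Viol G L k S
    · exact Or.inl ⟨S, hSne, Finset.Subset.refl S, hviol⟩
    rw [Viol] at hviol
    push_neg at hviol
    obtain ⟨v, hvS, hvlt⟩ := hviol
    have hsub : S.erase v ⊂ S := Finset.erase_ssubset hvS
    rcases ih (S.erase v) hsub with ⟨S', h1, h2, h3⟩ | ⟨g', hg1, hg2, hg3⟩
    · exact Or.inl ⟨S', h1, h2.trans (Finset.erase_subset v S), h3⟩
    right
    refine ⟨fun x => if x = v then S.card - 1 else g' x, ?_, ?_, ?_⟩
    · intro x hx
      show (if x = v then S.card - 1 else g' x) < S.card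
      by_cases hxv : x = v
      · simp only [hxv, if_pos rfl]
        exact Nat.sub_lt (Finset.card_pos.mpr hSne) one_pos
      · simp only [if_neg hxv]
        have := hg1 x (Finset.mem_erase.mpr ⟨hxv, hx⟩)
        have hcard : (S.erase v).card = S.card - 1 := Finset.card_erase_of_mem hvS
        omega
    · intro x hx y hy hxy
      have hxy : (if x = v then S.card - 1 else g' x) = (if y = v then S.card - 1 else g' y) := hxy
      by_cases hxv : x = v <;> by_cases hyv : y = v
      · rw [hxv, hyv]
      · exfalso
        rw [if_pos hxv, if_neg hyv] at hxy
        have := hg1 y (Finset.mem_erase.mpr ⟨hyv, hy⟩)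
        have hcard : (S.erase v).card = S.card - 1 := Finset.card_erase_of_mem hvS
        have hone := Finset.card_pos.mpr hSne
        omega
      · exfalso
        rw [if_neg hxv, if_pos hyv] at hxy
        have := hg1 x (Finset.mem_erase.mpr ⟨hxv, hx⟩)
        have hcard : (S.erase v).card = S.card - 1 := Finset.card_erase_of_mem hvS
        have hone := Finset.card_pos.mpr hSne
        omega
      · rw [if_neg hxv, if_neg hyv] at hxy
        exact hg2 (Finset.mem_coe.mpr (Finset.mem_erase.mpr ⟨hxv, hx⟩))
          (Finset.mem_coe.mpr (Finset.mem_erase.mpr ⟨hyv, hy⟩)) hxy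
    · intro x hx
      have hcard : (S.erase v).card = S.card - 1 := Finset.card_erase_of_mem hvS
      by_cases hxv : x = v
      · subst hxv
        have hfil : S.filter (fun u =>
            (if u = x then S.card - 1 else g' u) < (if x = x then S.card - 1 else g' x))
            ⊆ S.erase x := by
          intro u hu
          rw [Finset.mem_filter] at hu
          rcases hu with ⟨huS, hult⟩
          refine Finset.mem_erase.mpr ⟨?_, huS⟩
          intro huv
          rw [if_pos huv, if_pos rfl] at hult
          omega
        refine le_trans ?_ hvlt.le
        have := Finset.card_le_card (Finset.inter_subset_inter (Finset.Subset.refl (G.neighborFinset x)) hfil)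
        calc ((G.neighborFinset x ∩ _).card : ℝ) ≤ ((G.neighborFinset x ∩ S.erase x).card : ℝ) := by
              exact_mod_cast this
          _ ≤ ((G.neighborFinset x ∩ S).card : ℝ) := by
              exact_mod_cast Finset.card_le_card
                (Finset.inter_subset_inter (Finset.Subset.refl (G.neighborFinset x)) (Finset.erase_subset x S))
      · have hxe : x ∈ S.erase v := Finset.mem_erase.mpr ⟨hxv, hx⟩
        have hfil : S.filter (fun u =>
            (if u = v then S.card - 1 else g' u) < (if x = v then S.card - 1 else g' x))
            = (S.erase v).filter (fun u => g' u < g' x) := by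
          ext u
          simp only [Finset.mem_filter, Finset.mem_erase]
          constructor
          · rintro ⟨huS, hult⟩
            rw [if_neg hxv] at hult
            have huv : u ≠ v := by
              intro huv
              rw [if_pos huv] at hult
              have := hg1 x hxe
              omega
            rw [if_neg huv] at hult
            exact ⟨⟨huv, huS⟩, hult⟩
          · rintro ⟨⟨huv, huS⟩, hult⟩
            rw [if_neg hxv, if_neg huv]
            exact ⟨huS, hult⟩
        rw [hfil]
        exact hg3 x hxe

lemma sto_of_inj (h : V → ℕ) (hinj : Function.Injective h) :
    IsStrictTotalOrder V (fun a b => h a < h b) where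
  trichotomous := fun a b h1 h2 => hinj (le_antisymm (not_lt.mp h2) (not_lt.mp h1))
  irrefl := fun a => lt_irrefl _
  trans := fun a b c => Nat.lt_trans

/-- Either there is a violating subset of `Bad`, or there is an injection `h : V → ℕ`
making every member of `Bad` prioritized. -/
lemma order_or_viol (G : SimpleGraph V) (L : V → Finset ℕ) (k : ℕ) (Bad : Finset V) :
    (∃ S' : Finset V, S'.Nonempty ∧ S' ⊆ Bad ∧ Viol G L k S') ∨
    ∃ h : V → ℕ, Function.Injective h ∧ ∀ v ∈ Bad,
      TTf G L k v ≤ (({u | G.Adj v u ∧ h v < h u} : Set V).ncard : ℝ) := by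
  rcases greedy G L k Bad with hv | ⟨g, hg1, hg2, hg3⟩
  · exact Or.inl hv
  right
  obtain ⟨e⟩ : Nonempty (V ≃ Fin (Fintype.card V)) := ⟨Fintype.equivFin V⟩
  refine ⟨fun v => if v ∈ Bad then g v else Bad.card + (e v).val, ?_, ?_⟩
  · intro x y hxy
    have hxy : (if x ∈ Bad then g x else Bad.card + (e x).val)
        = (if y ∈ Bad then g y else Bad.card + (e y).val) := hxy
    by_cases hxb : x ∈ Bad <;> by_cases hyb : y ∈ Bad
    · rw [if_pos hxb, if_pos hyb] at hxy
      exact hg2 (Finset.mem_coe.mpr hxb) (Finset.mem_coe.mpr hyb) hxy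
    · rw [if_pos hxb, if_neg hyb] at hxy
      have := hg1 x hxb
      omega
    · rw [if_neg hxb, if_pos hyb] at hxy
      have := hg1 y hyb
      omega

    · rw [if_neg hxb, if_neg hyb] at hxy
      have : e x = e y := Fin.ext (by omega)
      exact e.injective this
  · intro v hvB
    set h : V → ℕ := fun v => if v ∈ Bad then g v else Bad.card + (e v).val with hh
    have hset : ({u | G.Adj v u ∧ h v < h u} : Set V)
        = ↑((G.neighborFinset v).filter (fun u => h v < h u)) := by
      ext u
      simp [SimpleGraph.mem_neighborFinset]
    rw [hset, Set.ncard_coe_finset]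
    have hsplit : ((G.neighborFinset v).filter (fun u => h v < h u)).card
        + ((G.neighborFinset v).filter (fun u => ¬ (h v < h u))).card = deg G v := by
      rw [deg_eq_card]
      exact Finset.card_filter_add_card_filter_not _
    have hsub : (G.neighborFinset v).filter (fun u => ¬ (h v < h u))
        ⊆ G.neighborFinset v ∩ Bad.filter (fun u => g u < g v) := by
      intro u hu
      rw [Finset.mem_filter] at hu
      obtain ⟨hun, hule⟩ := hu
      push_neg at hule
      have huB : u ∈ Bad := by
        by_contra huB
        rw [hh] at hule
        simp only [if_pos hvB, if_neg huB] at hule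
        have := hg1 v hvB
        omega
      have hne : u ≠ v := by
        intro huv
        subst huv
        exact G.irrefl ((G.mem_neighborFinset u u).mp hun)
      refine Finset.mem_inter.mpr ⟨hun, Finset.mem_filter.mpr ⟨huB, ?_⟩⟩
      rw [hh] at hule
      simp only [if_pos hvB, if_pos huB] at hule
      rcases Nat.lt_or_ge (g u) (g v) with h1 | h1
      · exact h1
      · exfalso
        have : g u = g v := le_antisymm hule h1
        exact hne (hg2 (Finset.mem_coe.mpr huB) (Finset.mem_coe.mpr hvB) this)
    have hb2 := hg3 v hvB
    have hmono : (((G.neighborFinset v).filter (fun u => ¬ (h v < h u))).card : ℝ)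
        ≤ ((G.neighborFinset v ∩ Bad.filter (fun u => g u < g v)).card : ℝ) := by
      exact_mod_cast Finset.card_le_card hsub
    have hcast : (((G.neighborFinset v).filter (fun u => h v < h u)).card : ℝ)
        + (((G.neighborFinset v).filter (fun u => ¬ (h v < h u))).card : ℝ) = (deg G v : ℝ) := by
      exact_mod_cast hsplit
    linarith

end Order

section AntiMatching

lemma card_filter_pair (T : Finset V) (e : Sym2 V) (h1 : ∀ x ∈ e, x ∈ (↑T : Set V))
    (h2 : ¬ e.IsDiag) : (T.filter (fun x => x ∈ e)).card = 2 := by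
  induction e using Sym2.ind with
  | _ a b =>
    have hab : a ≠ b := by
      intro h
      exact h2 (Sym2.mk_isDiag_iff.mpr h)
    have ha : a ∈ T := by exact_mod_cast h1 a (Sym2.mem_mk_left a b)
    have hb : b ∈ T := by exact_mod_cast h1 b (Sym2.mem_mk_right a b)
    have : T.filter (fun x => x ∈ s(a, b)) = {a, b} := by
      ext x
      simp only [Finset.mem_filter, Sym2.mem_iff, Finset.mem_insert, Finset.mem_singleton]
      constructor
      · rintro ⟨-, h⟩; exact h
      · rintro (rfl | rfl)
        · exact ⟨ha, Or.inl rfl⟩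
        · exact ⟨hb, Or.inr rfl⟩
    rw [this, Finset.card_insert_of_notMem (by simpa using hab), Finset.card_singleton]

lemma antimatching_card (G : SimpleGraph V) (T : Finset V) (M : Finset (Sym2 V))
    (hM : IsAntiMatchingOn G (↑T : Set V) M) :
    (T.filter (fun x => ∃ e ∈ M, x ∈ e)).card = 2 * M.card := by
  obtain ⟨h1, h2, h3, h4⟩ := hM
  have hequ : T.filter (fun x => ∃ e ∈ M, x ∈ e) = M.biUnion (fun e => T.filter (fun x => x ∈ e)) := by
    ext x
    simp only [Finset.mem_filter, Finset.mem_biUnion]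
    constructor
    · rintro ⟨hx, e, he, hxe⟩; exact ⟨e, he, hx, hxe⟩
    · rintro ⟨e, he, hx, hxe⟩; exact ⟨hx, e, he, hxe⟩
  rw [hequ, Finset.card_biUnion]
  · rw [Finset.sum_congr rfl (fun e he => card_filter_pair T e (h1 e he) (h2 e he))]
    rw [Finset.sum_const, smul_eq_mul]
    ring
  · intro e he f hf hef
    rw [Function.onFun, Finset.disjoint_left]
    intro x hxe hxf
    rw [Finset.mem_filter] at hxe hxf
    exact h4 e he f hf hef x hxe.2 hxf.2

/-- The key interface: a maximum antimatching inside a "near-dominated" set `T` gives both a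
clique bound for `omegaAt` and (by non-density) a lower bound on nonadjacent pairs. -/
lemma antimatching_interface (G : SimpleGraph V) (L : V → Finset ℕ)
    (hnd : ∀ T : Finset V, ¬ DenseWrt G L T) (T : Finset V) (v : V)
    (hvT : v ∈ T) (hadj : ∀ x ∈ T, x ≠ v → G.Adj v x) :
    ∃ m : ℕ, 2 * m ≤ T.card ∧ ((T.card : ℝ) - 2 * m ≤ (omegaAt G v : ℝ)) ∧
      (m : ℝ) * ((T.card : ℝ) - m) ≤ (nonadjPairs G (↑T : Set V) : ℝ) + ∑ u ∈ T, SaveR G L u := by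
  classical
  -- pick a maximum-cardinality antimatching on T
  set 𝒜 : Finset (Finset (Sym2 V)) :=
    Finset.univ.filter (fun M => IsAntiMatchingOn G (↑T : Set V) M) with h𝒜
  have hne : 𝒜.Nonempty := by
    refine ⟨∅, ?_⟩
    rw [h𝒜, Finset.mem_filter]
    exact ⟨Finset.mem_univ _, by simp [IsAntiMatchingOn]⟩
  obtain ⟨M, hM𝒜, hMmax⟩ := Finset.exists_max_image 𝒜 Finset.card hne
  rw [h𝒜, Finset.mem_filter] at hM𝒜
  have hM : IsAntiMatchingOn G (↑T : Set V) M := hM𝒜.2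
  obtain ⟨h1, h2, h3, h4⟩ := hM
  set W := T.filter (fun x => ∃ e ∈ M, x ∈ e) with hW
  have hWcard : W.card = 2 * M.card := antimatching_card G T M ⟨h1, h2, h3, h4⟩
  have hWT : W ⊆ T := Finset.filter_subset _ _
  set C := T \ W with hC
  have hCcard : C.card = T.card - W.card := Finset.card_sdiff_of_subset hWT
  have h2m : 2 * M.card ≤ T.card := by
    rw [← hWcard]
    exact Finset.card_le_card hWT
  -- C is a clique
  have hclique : ∀ x ∈ C, ∀ y ∈ C, x ≠ y → G.Adj x y := by
    intro x hx y hy hxy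
    by_contra hnadj
    have hxT : x ∈ T := (Finset.mem_sdiff.mp hx).1
    have hyT : y ∈ T := (Finset.mem_sdiff.mp hy).1
    have hxW : ∀ e ∈ M, x ∉ e := by
      intro e he hxe
      exact (Finset.mem_sdiff.mp hx).2 (Finset.mem_filter.mpr ⟨hxT, e, he, hxe⟩)
    have hyW : ∀ e ∈ M, y ∉ e := by
      intro e he hye
      exact (Finset.mem_sdiff.mp hy).2 (Finset.mem_filter.mpr ⟨hyT, e, he, hye⟩)
    have hnotmem : s(x, y) ∉ M := fun h => hxW _ h (Sym2.mem_mk_left x y)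
    have hM' : IsAntiMatchingOn G (↑T : Set V) (insert s(x, y) M) := by
      refine ⟨?_, ?_, ?_, ?_⟩
      · intro e he z hz
        rcases Finset.mem_insert.mp he with rfl | he'
        · rcases Sym2.mem_iff.mp hz with rfl | rfl
          · exact_mod_cast hxT
          · exact_mod_cast hyT
        · exact h1 e he' z hz
      · intro e he
        rcases Finset.mem_insert.mp he with rfl | he'
        · rw [Sym2.mk_isDiag_iff]
          exact hxy
        · exact h2 e he'
      · intro e he u w huw
        rcases Finset.mem_insert.mp he with rfl | he'
        · rcases Sym2.eq_iff.mp huw.symm with ⟨rfl, rfl⟩ | ⟨rfl, rfl⟩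
          · exact hnadj
          · exact fun h => hnadj (G.adj_symm h)
        · exact h3 e he' u w huw
      · intro e he f hf hef z hze
        rcases Finset.mem_insert.mp he with rfl | he' <;>
          rcases Finset.mem_insert.mp hf with rfl | hf'
        · exact absurd rfl hef
        · rcases Sym2.mem_iff.mp hze with rfl | rfl
          · exact hxW f hf'
          · exact hyW f hf'
        · intro hzf
          rcases Sym2.mem_iff.mp hzf with rfl | rfl
          · exact hxW e he' hze
          · exact hyW e he' hze
        · exact h4 e he' f hf' hef z hze
    have : (insert s(x, y) M).card ≤ M.card := by
      apply hMmax
      rw [h𝒜, Finset.mem_filter]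
      exact ⟨Finset.mem_univ _, hM'⟩
    rw [Finset.card_insert_of_notMem hnotmem] at this
    omega
  -- v belongs to C
  have hvC : v ∈ C := by
    rw [hC, Finset.mem_sdiff]
    refine ⟨hvT, ?_⟩
    rw [hW, Finset.mem_filter]
    rintro ⟨-, e, he, hve⟩
    induction e using Sym2.ind with
    | _ a b =>
      have hab : a ≠ b := fun h => h2 _ he (Sym2.mk_isDiag_iff.mpr h)
      have haT : a ∈ T := by exact_mod_cast h1 _ he a (Sym2.mem_mk_left a b)
      have hbT : b ∈ T := by exact_mod_cast h1 _ he b (Sym2.mem_mk_right a b)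
      have hnadj : ¬ G.Adj a b := h3 _ he a b rfl
      rcases Sym2.mem_iff.mp hve with rfl | rfl
      · exact hnadj (hadj b hbT (fun h => hab h.symm))
      · exact hnadj (G.adj_symm (hadj a haT hab))
  refine ⟨M.card, h2m, ?_, ?_⟩
  · -- clique bound
    have hNC : G.IsNClique C.card C := by
      constructor
      · intro x hx y hy hxy
        exact hclique x (by exact_mod_cast hx) y (by exact_mod_cast hy) hxy
      · rfl
    have := le_omegaAt hNC hvC
    have hcast : (C.card : ℝ) = (T.card : ℝ) - 2 * M.card := by
      rw [hCcard, hWcard] at *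
      have := h2m
      push_cast [Nat.cast_sub (by omega : 2 * M.card ≤ T.card)]
      ring
    have : (C.card : ℝ) ≤ (omegaAt G v : ℝ) := by exact_mod_cast this
    linarith [hcast ▸ this]
  · -- non-density
    have hD := hnd T
    rw [DenseWrt] at hD
    push_neg at hD
    have := hD M ⟨h1, h2, h3, h4⟩
    linarith

end AntiMatching

section Pointwise

def NSf (G : SimpleGraph V) (S : Finset V) (v : V) : Finset V := G.neighborFinset v ∩ S

def Tvf (G : SimpleGraph V) (S : Finset V) (v : V) : Finset V := insert v (NSf G S v)

def Zvf (G : SimpleGraph V) (L : V → Finset ℕ) (S : Finset V) (v : V) : Finset V :=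
  (NSf G S v).filter (fun u => u ∉ Egal G L del0 alp0 v)

def Qvf (G : SimpleGraph V) (L : V → Finset ℕ) (S : Finset V) (v : V) : ℝ :=
  ∑ u ∈ Tvf G S v, SaveR G L u

def Legf (G : SimpleGraph V) (L : V → Finset ℕ) (k : ℕ) (v : V) : ℝ :=
  300 * (SaveR G L v + 121 * eps0 * logTen k)

def Labf (G : SimpleGraph V) (L : V → Finset ℕ) (k : ℕ) (v : V) : ℝ :=
  600 * (SaveR G L v + 121 * eps0 * logTen k)

lemma nonadj_split (G : SimpleGraph V) (v : V) (Tv Z : Finset V) (E : Set V)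
    (hTv : ∀ x ∈ Tv, x = v ∨ G.Adj v x)
    (hcover : ∀ x ∈ Tv, x ≠ v → x ∉ E → x ∈ Z) :
    (nonadjPairs G (↑Tv : Set V) : ℝ) ≤ (nonadjPairs G E : ℝ) + (Z.card : ℝ) * (Tv.card : ℝ) := by
  classical
  set P1 : Set (Sym2 V) := {e | ∃ u w : V, u ∈ (↑Tv : Set V) ∧ w ∈ (↑Tv : Set V) ∧ u ≠ w ∧
    ¬ G.Adj u w ∧ e = s(u, w)} with hP1
  set P2 : Set (Sym2 V) := {e | ∃ u w : V, u ∈ E ∧ w ∈ E ∧ u ≠ w ∧ ¬ G.Adj u w ∧ e = s(u, w)}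
    with hP2
  set B : Set (Sym2 V) := (fun p : V × V => s(p.1, p.2)) '' ((↑Z : Set V) ×ˢ (↑Tv : Set V)) with hB
  have hsub : P1 ⊆ P2 ∪ B := by
    rintro e ⟨u, w, hu, hw, hne, hnadj, rfl⟩
    have huT : u ∈ Tv := by exact_mod_cast hu
    have hwT : w ∈ Tv := by exact_mod_cast hw
    by_cases huE : u ∈ E
    · by_cases hwE : w ∈ E
      · exact Or.inl ⟨u, w, huE, hwE, hne, hnadj, rfl⟩
      · -- w ∉ E hence w ∈ Z
        have hwv : w ≠ v := by
          rintro rfl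
          rcases hTv u huT with rfl | hadj
          · exact hne rfl
          · exact hnadj (G.adj_symm hadj)
        have hwZ : w ∈ Z := hcover w hwT hwv hwE
        refine Or.inr ⟨(w, u), ⟨by exact_mod_cast hwZ, hu⟩, ?_⟩
        exact (Sym2.eq_swap)
    · have huv : u ≠ v := by
        rintro rfl
        rcases hTv w hwT with rfl | hadj
        · exact hne rfl
        · exact hnadj hadj
      have huZ : u ∈ Z := hcover u huT huv huE
      exact Or.inr ⟨(u, w), ⟨by exact_mod_cast huZ, hw⟩, rfl⟩
  have h1 : nonadjPairs G (↑Tv : Set V) ≤ P2.ncard + B.ncard := by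
    calc nonadjPairs G (↑Tv : Set V) = P1.ncard := rfl
      _ ≤ (P2 ∪ B).ncard := Set.ncard_le_ncard hsub (Set.toFinite _)
      _ ≤ P2.ncard + B.ncard := Set.ncard_union_le _ _
  have h2 : B.ncard ≤ Z.card * Tv.card := by
    calc B.ncard ≤ ((↑Z : Set V) ×ˢ (↑Tv : Set V)).ncard := Set.ncard_image_le (Set.toFinite _)
      _ = (Z ×ˢ Tv).card := by rw [← Finset.coe_product, Set.ncard_coe_finset]
      _ = Z.card * Tv.card := Finset.card_product Z Tv
  have : nonadjPairs G (↑Tv : Set V) ≤ nonadjPairs G E + Z.card * Tv.card := by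
    have : P2.ncard = nonadjPairs G E := rfl
    omega
  exact_mod_cast this

set_option maxHeartbeats 1000000 in
lemma pointwise_gap (G : SimpleGraph V) (L : V → Finset ℕ) (k : ℕ)
    (hk : 1 ≤ k) (hL : ∀ u, (L u).card ≤ min (deg G u) k)
    (hnd : ∀ T : Finset V, ¬ DenseWrt G L T)
    (hEH : ∀ u, chR G L eps0 k u < 9 * eps0 * (deg G u : ℝ))
    (S : Finset V) (hvio : Viol G L k S)
    (v : V) (hvS : v ∈ S) (hbad : ¬ GoodV G L k v) :
    2 * eps0 * (k : ℝ) * GapR G v ≤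
      (k : ℝ) * (2 * eps0 * TTf G L k v + 64 * eps0 * Legf G L k v
        + 96 * eps0 * ((Zvf G L S v).card : ℝ)) + 32 * eps0 * Qvf G L S v := by
  obtain ⟨hS1, hS2, hlog, hk3, hd2k, hd1⟩ := noEH_facts G L k v hk (hL v) (hEH v)
  obtain ⟨hT1, hT2, hT3⟩ := TTf_bounds G L k v hS1
  have hkr : (1:ℝ) ≤ (k:ℝ) := by exact_mod_cast hk
  have he : eps0 = 2.6e-10 := rfl
  have he' : eps0' = 2.86e-9 := eps0'_val
  have hT4 : TTf G L k v ≤ (deg G v : ℝ) / 4 := by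
    rw [he'] at hT2
    rw [he] at hS2
    linarith
  set d : ℝ := (deg G v : ℝ) with hd
  -- cardinality of Tv
  have hvNS : v ∉ NSf G S v := by
    rw [NSf, Finset.mem_inter]
    rintro ⟨h, -⟩
    exact G.irrefl ((G.mem_neighborFinset v v).mp h)
  have htcard : (Tvf G S v).card = (NSf G S v).card + 1 := by
    rw [Tvf, Finset.card_insert_of_notMem hvNS]
  have hNSd : ((NSf G S v).card : ℝ) ≤ d := by
    rw [hd, deg_eq_card]
    exact_mod_cast Finset.card_le_card (Finset.inter_subset_left)
  have ht_lb : d + 1 - TTf G L k v ≤ ((Tvf G S v).card : ℝ) := by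
    have h0 := hvio v hvS
    rw [htcard]
    push_cast
    rw [NSf]
    linarith
  have ht_ub : ((Tvf G S v).card : ℝ) ≤ d + 1 := by
    rw [htcard]
    push_cast
    linarith
  -- the antimatching interface
  obtain ⟨m, h2m, homega, hmQ⟩ := antimatching_interface G L hnd (Tvf G S v) v
    (Finset.mem_insert_self v _)
    (by
      intro x hx hxv
      rcases Finset.mem_insert.mp hx with rfl | hxNS
      · exact absurd rfl hxv
      · exact (G.mem_neighborFinset v x).mp (Finset.mem_inter.mp hxNS).1)
  -- Gap bound via clique
  have hGap2m : GapR G v ≤ TTf G L k v + 2 * m := by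
    rw [GapR, ← hd]
    have h2m' : (2*m : ℝ) ≤ ((Tvf G S v).card : ℝ) := by exact_mod_cast h2m
    linarith [homega, ht_lb]
  -- nonadjacency split
  have hsplit := nonadj_split G v (Tvf G S v) (Zvf G L S v) (Egal G L del0 alp0 v)
    (by
      intro x hx
      rcases Finset.mem_insert.mp hx with rfl | hxNS
      · exact Or.inl rfl
      · exact Or.inr ((G.mem_neighborFinset v x).mp (Finset.mem_inter.mp hxNS).1))
    (by
      intro x hx hxv hxE
      rcases Finset.mem_insert.mp hx with rfl | hxNS
      · exact absurd rfl hxv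
      · rw [Zvf, Finset.mem_filter]
        exact ⟨hxNS, hxE⟩)
  -- not egalitarian-sparse
  have hEgS : ¬ EgalSparse G L alp0 del0 eps0' K0 k v := fun h => hbad (Or.inr h)
  rw [EgalSparse, not_le] at hEgS
  have hEgbound : (nonadjPairs G (Egal G L del0 alp0 v) : ℝ) ≤ d * Legf G L k v := by
    have hlgt := logTen_nonneg k
    have hnum : 0 ≤ SaveR G L v + 11 * eps0' * logTen k := by
      rw [he']
      linarith [logTen_nonneg k]
    have hceg := Ceg_lb
    have hdiv : (SaveR G L v + 11 * eps0' * logTen k) / Ceg K0 alp0 del0 eps0'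
        ≤ Legf G L k v := by
      calc (SaveR G L v + 11 * eps0' * logTen k) / Ceg K0 alp0 del0 eps0'
          ≤ (SaveR G L v + 11 * eps0' * logTen k) / (1/300) := by
            apply div_le_div_of_nonneg_left hnum (by norm_num) hceg
        _ = 300 * (SaveR G L v + 11 * eps0' * logTen k) := by ring
        _ = Legf G L k v := by
            rw [Legf, he', he]
            norm_num
    have hd0 : 0 ≤ d := by rw [hd]; exact Nat.cast_nonneg _
    calc (nonadjPairs G (Egal G L del0 alp0 v) : ℝ)
        ≤ d * ((SaveR G L v + 11 * eps0' * logTen k) / Ceg K0 alp0 del0 eps0') := hEgS.le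
      _ ≤ d * Legf G L k v := mul_le_mul_of_nonneg_left hdiv hd0
  have hmQ' : (m:ℝ) * (((Tvf G S v).card : ℝ) - (m:ℝ))
      ≤ (nonadjPairs G (↑(Tvf G S v) : Set V) : ℝ) + Qvf G L S v := by
    rw [Qvf]; exact hmQ
  clear hmQ
  -- abbreviations
  have hQ0 : 0 ≤ Qvf G L S v := by
    rw [Qvf]
    apply Finset.sum_nonneg
    intro u hu
    have := (noEH_facts G L k u hk (hL u) (hEH u)).1
    linarith
  have hLeg0 : 0 ≤ Legf G L k v := by
    rw [Legf, he]
    have := logTen_nonneg k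
    linarith
  have hk0 : (0:ℝ) ≤ (k:ℝ) := Nat.cast_nonneg _
  set t : ℝ := ((Tvf G S v).card : ℝ) with ht
  set mm : ℝ := (m : ℝ) with hmm
  set Z : ℝ := ((Zvf G L S v).card : ℝ) with hZ
  set Q : ℝ := Qvf G L S v with hQdef
  set Leg : ℝ := Legf G L k v with hLeg
  have hZ0 : 0 ≤ Z := by rw [hZ]; exact Nat.cast_nonneg _
  have hm0 : 0 ≤ mm := by rw [hmm]; exact Nat.cast_nonneg _
  have ht0 : 0 ≤ t := by rw [ht]; exact Nat.cast_nonneg _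
  have hd0 : 0 ≤ d := by rw [hd]; exact Nat.cast_nonneg _
  have h2m' : 2 * mm ≤ t := by rw [hmm, ht]; exact_mod_cast h2m
  clear_value t mm Z Q Leg d
  have hmt : mm * t ≤ 2 * (d * Leg) + 2 * (Z * t) + 2 * Q := by
    have hkey : 0 ≤ mm * (t - 2 * mm) := mul_nonneg hm0 (by linarith)
    linarith only [hsplit, hEgbound, hmQ', hkey]
  have h34 : 3 * d ≤ 4 * t := by linarith only [ht_lb, hT4, hT3]
  have e1 : (k:ℝ) * mm ≤ 3 * d * mm := mul_le_mul_of_nonneg_right hk3 hm0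
  have e2 : 3 * d * mm ≤ 4 * (t * mm) := by
    linarith only [mul_le_mul_of_nonneg_right h34 hm0]
  have e3 : 4 * (t * mm) ≤ 8 * (d * Leg) + 8 * (Z * t) + 8 * Q := by linarith only [hmt]
  have e4 : 8 * (Z * t) ≤ 24 * ((k:ℝ) * Z) := by
    linarith only [mul_le_mul_of_nonneg_right ht_ub hZ0,
      mul_le_mul_of_nonneg_right hd2k hZ0, mul_le_mul_of_nonneg_right hkr hZ0]
  have e5 : 8 * (d * Leg) ≤ 16 * ((k:ℝ) * Leg) := by
    linarith only [mul_le_mul_of_nonneg_right hd2k hLeg0]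
  have hkm : (k:ℝ) * mm ≤ 16 * ((k:ℝ) * Leg) + 24 * ((k:ℝ) * Z) + 8 * Q := by
    linarith only [e1, e2, e3, e4, e5]
  have hfin2 : (k:ℝ) * GapR G v
      ≤ (k:ℝ) * TTf G L k v + 32 * ((k:ℝ) * Leg) + 48 * ((k:ℝ) * Z) + 16 * Q := by
    have h6 := mul_le_mul_of_nonneg_left hGap2m hk0
    linarith only [h6, hkm]
  have h2e : (0:ℝ) ≤ 2 * eps0 := by rw [he]; norm_num
  calc 2 * eps0 * (k : ℝ) * GapR G v = 2 * eps0 * ((k:ℝ) * GapR G v) := by ring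
    _ ≤ 2 * eps0 * ((k:ℝ) * TTf G L k v + 32 * ((k:ℝ) * Leg) + 48 * ((k:ℝ) * Z) + 16 * Q) :=
        mul_le_mul_of_nonneg_left hfin2 h2e
    _ = (k : ℝ) * (2 * eps0 * TTf G L k v + 64 * eps0 * Leg + 96 * eps0 * Z) + 32 * eps0 * Q := by
        ring

end Pointwise

section Classify

lemma trichotomy_nbr (G : SimpleGraph V) (L : V → Finset ℕ) (v u : V)
    (hadj : G.Adj v u) (hE : u ∉ Egal G L del0 alp0 v) :
    u ∈ Subserv G L del0 v ∨ u ∈ Lord G L alp0 v := by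
  rw [Egal, Set.mem_setOf_eq] at hE
  push_neg at hE
  by_cases hs : ((L u).card : ℝ) < (1 - del0) * ((L v).card : ℝ)
  · exact Or.inl ⟨hadj, hs⟩
  · push_neg at hs
    exact Or.inr ⟨hadj, hE hadj hs⟩

lemma subserv_lord (G : SimpleGraph V) (L : V → Finset ℕ) (v u : V)
    (hadj : G.Adj v u) (hS : u ∈ Subserv G L del0 v) : v ∈ Lord G L alp0 u := by
  obtain ⟨-, hlt⟩ := hS
  refine ⟨G.adj_symm hadj, ?_⟩
  have h0 : (0:ℝ) ≤ ((L v).card : ℝ) := Nat.cast_nonneg _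
  have ha : (0:ℝ) < 1 + alp0 := by
    obtain ⟨h1, -⟩ := alp0_bounds
    linarith
  have h2 : (1 + alp0) * ((L u).card : ℝ) ≤ (1 + alp0) * ((1 - del0) * ((L v).card : ℝ)) :=
    mul_le_mul_of_nonneg_left hlt.le ha.le
  have h3 : (1 + alp0) * ((1 - del0) * ((L v).card : ℝ)) ≤ ((L v).card : ℝ) := by
    have := sub_lord_const
    nlinarith
  linarith

lemma lord_card_le (G : SimpleGraph V) (L : V → Finset ℕ) (k : ℕ) (v : V)
    (hAb : ¬ Aberrant G L alp0 eps0' K0 k v) (hS1 : 1 ≤ SaveR G L v) :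
    ((Lord G L alp0 v).ncard : ℝ) ≤ Labf G L k v := by
  rw [Aberrant, not_le] at hAb
  have hlgt := logTen_nonneg k
  have he' : eps0' = 11 * eps0 := rfl
  have he : eps0 = 2.6e-10 := rfl
  have hnum : 0 ≤ SaveR G L v + 11 * eps0' * logTen k := by
    rw [he', he]
    linarith
  have hcab := Cab_lb
  calc ((Lord G L alp0 v).ncard : ℝ)
      ≤ (SaveR G L v + 11 * eps0' * logTen k) / Cab K0 alp0 eps0' := hAb.le
    _ ≤ (SaveR G L v + 11 * eps0' * logTen k) / (1/600) := by
        apply div_le_div_of_nonneg_left hnum (by norm_num) hcab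
    _ = 600 * (SaveR G L v + 11 * eps0' * logTen k) := by ring
    _ = Labf G L k v := by rw [Labf, he', he]; norm_num

lemma zv_card_bound (G : SimpleGraph V) (L : V → Finset ℕ) (k : ℕ) (S : Finset V) (v : V)
    (hAb : ¬ Aberrant G L alp0 eps0' K0 k v) (hS1 : 1 ≤ SaveR G L v) :
    ((Zvf G L S v).card : ℝ) ≤ ((S.filter (fun u => G.Adj v u ∧ u ∈ Subserv G L del0 v)).card : ℝ)
      + Labf G L k v := by
  classical
  set fSub := S.filter (fun u => G.Adj v u ∧ u ∈ Subserv G L del0 v) with hfSub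
  set fLord := (NSf G S v).filter (fun u => u ∈ Lord G L alp0 v) with hfLord
  have hsub : Zvf G L S v ⊆ fSub ∪ fLord := by
    intro u hu
    rw [Zvf, Finset.mem_filter] at hu
    obtain ⟨huNS, huE⟩ := hu
    have hadj : G.Adj v u := (G.mem_neighborFinset v u).mp (Finset.mem_inter.mp huNS).1
    have huS : u ∈ S := (Finset.mem_inter.mp huNS).2
    rcases trichotomy_nbr G L v u hadj huE with h | h
    · exact Finset.mem_union_left _ (Finset.mem_filter.mpr ⟨huS, hadj, h⟩)
    · exact Finset.mem_union_right _ (Finset.mem_filter.mpr ⟨huNS, h⟩)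
  have h1 : (Zvf G L S v).card ≤ fSub.card + fLord.card :=
    le_trans (Finset.card_le_card hsub) (Finset.card_union_le _ _)
  have h2 : (fLord.card : ℝ) ≤ Labf G L k v := by
    have hsubset : (↑fLord : Set V) ⊆ Lord G L alp0 v := by
      intro u hu
      rw [hfLord] at hu
      simp only [Finset.coe_filter, Set.mem_setOf_eq] at hu
      exact hu.2
    calc (fLord.card : ℝ) = ((↑fLord : Set V).ncard : ℝ) := by rw [Set.ncard_coe_finset]
      _ ≤ ((Lord G L alp0 v).ncard : ℝ) := by
          exact_mod_cast Set.ncard_le_ncard hsubset (Set.toFinite _)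
      _ ≤ Labf G L k v := lord_card_le G L k v hAb hS1
  have h1' : ((Zvf G L S v).card : ℝ) ≤ (fSub.card : ℝ) + (fLord.card : ℝ) := by
    exact_mod_cast h1
  linarith

lemma sub_sum_bound (G : SimpleGraph V) (L : V → Finset ℕ) (k : ℕ) (S : Finset V)
    (hSbad : ∀ v ∈ S, ¬ Aberrant G L alp0 eps0' K0 k v)
    (hS1 : ∀ v ∈ S, 1 ≤ SaveR G L v) :
    ∑ v ∈ S, ((S.filter (fun u => G.Adj v u ∧ u ∈ Subserv G L del0 v)).card : ℝ)
      ≤ ∑ u ∈ S, Labf G L k u := by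
  classical
  have hcard : ∀ v ∈ S, ((S.filter (fun u => G.Adj v u ∧ u ∈ Subserv G L del0 v)).card : ℝ)
      = ∑ u ∈ S, (if G.Adj v u ∧ u ∈ Subserv G L del0 v then (1:ℝ) else 0) := by
    intro v _
    rw [Finset.card_filter]
    push_cast
    rfl
  rw [Finset.sum_congr rfl hcard, Finset.sum_comm]
  have hpt : ∀ u ∈ S, ∑ v ∈ S, (if G.Adj v u ∧ u ∈ Subserv G L del0 v then (1:ℝ) else 0)
      ≤ Labf G L k u := by
    intro u huS
    have hle : ∑ v ∈ S, (if G.Adj v u ∧ u ∈ Subserv G L del0 v then (1:ℝ) else 0)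
        ≤ ∑ v ∈ S, (if v ∈ Lord G L alp0 u then (1:ℝ) else 0) := by
      apply Finset.sum_le_sum
      intro v _
      by_cases h : G.Adj v u ∧ u ∈ Subserv G L del0 v
      · rw [if_pos h, if_pos (subserv_lord G L v u h.1 h.2)]
      · rw [if_neg h]
        by_cases h2 : v ∈ Lord G L alp0 u
        · rw [if_pos h2]; norm_num
        · rw [if_neg h2]
    have heq : ∑ v ∈ S, (if v ∈ Lord G L alp0 u then (1:ℝ) else 0)
        = ((S.filter (fun v => v ∈ Lord G L alp0 u)).card : ℝ) := by
      rw [Finset.card_filter]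
      push_cast
      rfl
    have hsubset : (↑(S.filter (fun v => v ∈ Lord G L alp0 u)) : Set V) ⊆ Lord G L alp0 u := by
      intro w hw
      simp only [Finset.coe_filter, Set.mem_setOf_eq] at hw
      exact hw.2
    have hf : ((S.filter (fun v => v ∈ Lord G L alp0 u)).card : ℝ) ≤ Labf G L k u := by
      calc ((S.filter (fun v => v ∈ Lord G L alp0 u)).card : ℝ)
          = (((↑(S.filter (fun v => v ∈ Lord G L alp0 u)) : Set V)).ncard : ℝ) := by
            rw [Set.ncard_coe_finset]
        _ ≤ ((Lord G L alp0 u).ncard : ℝ) := by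
            exact_mod_cast Set.ncard_le_ncard hsubset (Set.toFinite _)
        _ ≤ Labf G L k u := lord_card_le G L k u (hSbad u huS) (hS1 u huS)
    linarith [hle, heq ▸ hf]
  exact Finset.sum_le_sum hpt

end Classify

section ViolD

set_option maxHeartbeats 1000000 in
lemma viol_D (G : SimpleGraph V) (L : V → Finset ℕ) (k : ℕ)
    (hk : 1 ≤ k) (hL : ∀ u, (L u).card ≤ min (deg G u) k)
    (hnd : ∀ T : Finset V, ¬ DenseWrt G L T)
    (hEH : ∀ u, chR G L eps0 k u < 9 * eps0 * (deg G u : ℝ))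
    (S : Finset V) (hSbad : ∀ v ∈ S, ¬ GoodV G L k v) (hvio : Viol G L k S) :
    9 * eps0 * ∑ u ∈ S, ((G.neighborFinset u \ S).card : ℝ) ≤ ∑ u ∈ S, chR G L eps0 k u := by
  classical
  have he : eps0 = 2.6e-10 := rfl
  have he' : eps0' = 11 * eps0 := rfl
  have hkr : (1:ℝ) ≤ (k:ℝ) := by exact_mod_cast hk
  have hk0 : (0:ℝ) ≤ (k:ℝ) := by linarith
  have hkpos : (0:ℝ) < (k:ℝ) := by linarith
  have hlgt0 : 0 ≤ logTen k := logTen_nonneg k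
  have hfacts : ∀ v ∈ S, 1 ≤ SaveR G L v ∧ SaveR G L v ≤ 11 * eps0 * (deg G v : ℝ) ∧
      logTen k ≤ 11 * (deg G v : ℝ) ∧ (k : ℝ) ≤ 3 * (deg G v : ℝ) ∧
      (deg G v : ℝ) ≤ 2 * (k : ℝ) ∧ (1:ℝ) ≤ (deg G v : ℝ) :=
    fun v _ => noEH_facts G L k v hk (hL v) (hEH v)
  have hS1 : ∀ v ∈ S, 1 ≤ SaveR G L v := fun v hv => (hfacts v hv).1
  have hX0 : 0 ≤ ∑ v ∈ S, SaveR G L v :=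
    Finset.sum_nonneg (fun v hv => by linarith [hS1 v hv])
  have hW0 : 0 ≤ (S.card : ℝ) * logTen k := by positivity
  -- out ≤ T pointwise, and sum
  have hout : ∀ v ∈ S, ((G.neighborFinset v \ S).card : ℝ) ≤ TTf G L k v := by
    intro v hv
    have hdiff := ncard_diff_eq G v S
    have hvio' := hvio v hv
    have hcast : ((G.neighborFinset v \ S).card : ℝ) + ((G.neighborFinset v ∩ S).card : ℝ)
        = (deg G v : ℝ) := by exact_mod_cast hdiff
    linarith
  have h1 : ∑ v ∈ S, ((G.neighborFinset v \ S).card : ℝ) ≤ ∑ v ∈ S, TTf G L k v :=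
    Finset.sum_le_sum hout
  -- sums of thresholds
  have h2 : ∑ v ∈ S, TTf G L k v
      ≤ 2 * (∑ v ∈ S, SaveR G L v) + 2 * eps0' * ((S.card : ℝ) * logTen k) := by
    calc ∑ v ∈ S, TTf G L k v ≤ ∑ v ∈ S, (2 * SaveR G L v + 2 * eps0' * logTen k) :=
          Finset.sum_le_sum (fun v hv => (TTf_bounds G L k v (hS1 v hv)).2.1)
      _ = 2 * (∑ v ∈ S, SaveR G L v) + 2 * eps0' * ((S.card : ℝ) * logTen k) := by
          rw [Finset.sum_add_distrib, ← Finset.mul_sum, Finset.sum_const, nsmul_eq_mul]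
          ring
  have h3 : ∑ v ∈ S, Legf G L k v
      = 300 * (∑ v ∈ S, SaveR G L v) + 36300 * eps0 * ((S.card : ℝ) * logTen k) := by
    simp only [Legf]
    rw [← Finset.mul_sum, Finset.sum_add_distrib, Finset.sum_const, nsmul_eq_mul]
    ring
  have h3b : ∑ v ∈ S, Labf G L k v
      = 600 * (∑ v ∈ S, SaveR G L v) + 72600 * eps0 * ((S.card : ℝ) * logTen k) := by
    simp only [Labf]
    rw [← Finset.mul_sum, Finset.sum_add_distrib, Finset.sum_const, nsmul_eq_mul]
    ring
  -- Z sum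
  have hAb : ∀ v ∈ S, ¬ Aberrant G L alp0 eps0' K0 k v :=
    fun v hv h => hSbad v hv (Or.inl h)
  have h4 : ∑ v ∈ S, ((Zvf G L S v).card : ℝ)
      ≤ 1200 * (∑ v ∈ S, SaveR G L v) + 145200 * eps0 * ((S.card : ℝ) * logTen k) := by
    have hz1 : ∑ v ∈ S, ((Zvf G L S v).card : ℝ)
        ≤ ∑ v ∈ S, (((S.filter (fun u => G.Adj v u ∧ u ∈ Subserv G L del0 v)).card : ℝ)
            + Labf G L k v) :=
      Finset.sum_le_sum (fun v hv => zv_card_bound G L k S v (hAb v hv) (hS1 v hv))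
    rw [Finset.sum_add_distrib] at hz1
    have hz2 := sub_sum_bound G L k S hAb hS1
    have hz3 := h3b
    linarith
  -- Q sum
  have h5 : ∑ v ∈ S, Qvf G L S v
      ≤ (∑ v ∈ S, SaveR G L v) + 2 * (k:ℝ) * (∑ v ∈ S, SaveR G L v) := by
    have hq1 : ∀ v ∈ S, Qvf G L S v
        = SaveR G L v + ∑ u ∈ G.neighborFinset v ∩ S, SaveR G L u := by
      intro v _
      have hvNS : v ∉ NSf G S v := by
        rw [NSf, Finset.mem_inter]
        rintro ⟨h, -⟩
        exact G.irrefl ((G.mem_neighborFinset v v).mp h)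
      rw [Qvf, Tvf, Finset.sum_insert hvNS, NSf]
    rw [Finset.sum_congr rfl hq1, Finset.sum_add_distrib, sum_weight_nbr_comm]
    have hpt : ∀ u ∈ S, SaveR G L u * ((G.neighborFinset u ∩ S).card : ℝ)
        ≤ SaveR G L u * (2 * (k:ℝ)) := by
      intro u hu
      apply mul_le_mul_of_nonneg_left _ (by linarith [hS1 u hu])
      have hcard : ((G.neighborFinset u ∩ S).card : ℝ) ≤ (deg G u : ℝ) := by
        rw [deg_eq_card]
        exact_mod_cast Finset.card_le_card Finset.inter_subset_left
      linarith [(hfacts u hu).2.2.2.2.1]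
    have := Finset.sum_le_sum hpt
    have heq : ∑ u ∈ S, SaveR G L u * (2 * (k:ℝ)) = 2 * (k:ℝ) * ∑ u ∈ S, SaveR G L u := by
      rw [← Finset.sum_mul]
      ring
    linarith
  -- gap sum
  have h6 : 2 * eps0 * (k:ℝ) * (∑ v ∈ S, GapR G v)
      ≤ (k:ℝ) * (2 * eps0 * (∑ v ∈ S, TTf G L k v) + 64 * eps0 * (∑ v ∈ S, Legf G L k v)
          + 96 * eps0 * (∑ v ∈ S, ((Zvf G L S v).card : ℝ)))
        + 32 * eps0 * (∑ v ∈ S, Qvf G L S v) := by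
    have hpt := fun v (hv : v ∈ S) =>
      pointwise_gap G L k hk hL hnd hEH S hvio v hv (hSbad v hv)
    have hsum := Finset.sum_le_sum hpt
    have hlhs : ∑ v ∈ S, 2 * eps0 * (k:ℝ) * GapR G v
        = 2 * eps0 * (k:ℝ) * (∑ v ∈ S, GapR G v) := by
      rw [Finset.mul_sum]
    have hrhs : ∑ v ∈ S, ((k : ℝ) * (2 * eps0 * TTf G L k v + 64 * eps0 * Legf G L k v
          + 96 * eps0 * ((Zvf G L S v).card : ℝ)) + 32 * eps0 * Qvf G L S v)
        = (k:ℝ) * (2 * eps0 * (∑ v ∈ S, TTf G L k v) + 64 * eps0 * (∑ v ∈ S, Legf G L k v)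
          + 96 * eps0 * (∑ v ∈ S, ((Zvf G L S v).card : ℝ)))
        + 32 * eps0 * (∑ v ∈ S, Qvf G L S v) := by
      simp only [Finset.sum_add_distrib, ← Finset.mul_sum]
    rw [hlhs, hrhs] at hsum
    exact hsum
  -- charge sum lower bound
  have h7 : (∑ v ∈ S, SaveR G L v) + eps0 * ((S.card : ℝ) * logTen k)
      - 2 * eps0 * (∑ v ∈ S, GapR G v) ≤ ∑ v ∈ S, chR G L eps0 k v := by
    have hpt : ∀ v ∈ S, SaveR G L v + eps0 * logTen k - 2 * eps0 * GapR G v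
        ≤ chR G L eps0 k v := by
      intro v _
      rw [chR]
      have hlk : ((L v).card : ℝ) ≤ (k : ℝ) := by
        exact_mod_cast (le_min_iff.mp (hL v)).2
      rw [he]
      linarith
    have := Finset.sum_le_sum hpt
    have heq : ∑ v ∈ S, (SaveR G L v + eps0 * logTen k - 2 * eps0 * GapR G v)
        = (∑ v ∈ S, SaveR G L v) + eps0 * ((S.card : ℝ) * logTen k)
          - 2 * eps0 * (∑ v ∈ S, GapR G v) := by
      rw [Finset.sum_sub_distrib, Finset.sum_add_distrib, ← Finset.mul_sum, ← Finset.mul_sum,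
        Finset.sum_const, nsmul_eq_mul]
      try ring
    linarith
  -- final assembly at the k-multiplied level
  rw [← mul_le_mul_iff_right₀ hkpos]
  have m1 := mul_le_mul_of_nonneg_left h1 hk0
  have m2 := mul_le_mul_of_nonneg_left h2 hk0
  have m3 := congrArg (fun x => (k:ℝ) * x) h3
  have m4 := mul_le_mul_of_nonneg_left h4 hk0
  have m7 := mul_le_mul_of_nonneg_left h7 hk0
  have m8 : (∑ v ∈ S, SaveR G L v) ≤ (k:ℝ) * (∑ v ∈ S, SaveR G L v) := by
    nlinarith
  have m9 : (0:ℝ) ≤ (k:ℝ) * ((S.card : ℝ) * logTen k) := mul_nonneg hk0 hW0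
  have m10 : (0:ℝ) ≤ (k:ℝ) * (∑ v ∈ S, SaveR G L v) := mul_nonneg hk0 hX0
  rw [he'] at m2
  rw [he] at m2 m3 m4 m7 h6 ⊢
  linarith [m1, m2, m3, m4, m7, h5, h6, m8, m9, m10, hX0, hW0, hk0]

end ViolD

theorem stmt5 :
    ∃ k₀ : ℕ, ∀ k : ℕ, k₀ ≤ k →
      ∀ (V : Type) [Fintype V], ∀ (G : SimpleGraph V) (L : V → Finset ℕ),
        (∑ v, (SaveR G L v + eps0 * logTen k)) ≤
          (∑ v, (2 * eps0 * GapR G v - 7 * eps0 * ((k : ℝ) - ((L v).card : ℝ)))) →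
        (∀ v, (L v).card ≤ min (deg G v) k) →
        (∀ T : Finset V, ¬ DenseWrt G L T) →
        (SavedWrt G L alp0 del0 eps0' sig0 K0 k ∨
          ∃ D : Finset V, D.Nonempty ∧ D ≠ Finset.univ ∧
            (∑ v ∈ Finset.univ \ D, (SaveR G L v + eps0 * logTen k)) ≤
              ∑ v ∈ Finset.univ \ D, (2 * eps0 * GapOnR G ((↑D : Set V)ᶜ) v -
                7 * eps0 * ((k : ℝ) - ((L v).card : ℝ) +
                  ((G.neighborSet v ∩ (↑D : Set V)).ncard : ℝ)))) := by
  refine ⟨1, ?_⟩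
  intro k hk V _ G L hsum hLmin hnd
  have he : eps0 = 2.6e-10 := rfl
  have he' : eps0' = 11 * eps0 := rfl
  have hepos : (0:ℝ) < eps0 := eps0_pos
  have hlgt0 : 0 ≤ logTen k := logTen_nonneg k
  -- global charge bound
  have hch_glob : ∑ v, chR G L eps0 k v ≤ 0 := by
    have heq : ∑ v, chR G L eps0 k v
        = (∑ v, (SaveR G L v + eps0 * logTen k))
          - (∑ v, (2 * eps0 * GapR G v - 7 * eps0 * ((k : ℝ) - ((L v).card : ℝ)))) := by
      rw [← Finset.sum_sub_distrib]
      apply Finset.sum_congr rfl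
      intro v _
      rw [chR]
      ring
    rw [heq]
    linarith
  by_cases hEHall : ∀ v, chR G L eps0 k v < 9 * eps0 * (deg G v : ℝ)
  · -- no extremely heavy vertex
    classical
    set Bad : Finset V := Finset.univ.filter (fun v => ¬ GoodV G L k v) with hBad
    rcases order_or_viol G L k Bad with ⟨S, hSne, hSsub, hSvio⟩ | ⟨h, hinj, hprio⟩
    · -- a violating set exists: excise it
      right
      have hSbad : ∀ v ∈ S, ¬ GoodV G L k v := by
        intro v hv
        have := hSsub hv
        rw [hBad, Finset.mem_filter] at this
        exact this.2
      by_cases hSU : S = Finset.univ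
      · -- shrink S by one vertex
        obtain ⟨w, hw⟩ := hSne
        have hTge1 : ∀ v : V, 1 ≤ TTf G L k v := fun v =>
          (TTf_bounds G L k v (noEH_facts G L k v hk (hLmin v) (hEHall v)).1).2.2
        -- |V| ≥ 2
        have h2V : 1 < S.card := by
          have hd1 := (noEH_facts G L k w hk (hLmin w) (hEHall w)).2.2.2.2.2
          have hdeg : 1 ≤ deg G w := by exact_mod_cast hd1
          rw [deg_eq_card] at hdeg
          obtain ⟨u, hu⟩ := Finset.card_pos.mp hdeg
          have huw : u ≠ w := fun h => G.irrefl (h ▸ (G.mem_neighborFinset w u).mp hu)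
          exact Finset.one_lt_card.mpr ⟨u, by rw [hSU]; exact Finset.mem_univ u, w, hw, huw⟩
        set S' := S.erase w with hS'
        have hS'ne : S'.Nonempty := by
          rw [hS', ← Finset.card_pos, Finset.card_erase_of_mem hw]
          omega
        have hS'sub : S' ⊆ S := Finset.erase_subset w S
        have hS'bad : ∀ v ∈ S', ¬ GoodV G L k v := fun v hv => hSbad v (hS'sub hv)
        have hS'vio : Viol G L k S' := by
          intro v hv
          have hvS : v ∈ S := hS'sub hv
          have hsub2 : (G.neighborFinset v).erase w ⊆ G.neighborFinset v ∩ S' := by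
            intro x hx
            obtain ⟨hxw, hxn⟩ := Finset.mem_erase.mp hx
            refine Finset.mem_inter.mpr ⟨hxn, ?_⟩
            rw [hS']
            exact Finset.mem_erase.mpr ⟨hxw, by rw [hSU]; exact Finset.mem_univ x⟩
          have hcard2 : ((G.neighborFinset v).erase w).card + 1 ≥ (G.neighborFinset v).card := by
            by_cases hwn : w ∈ G.neighborFinset v
            · rw [Finset.card_erase_of_mem hwn]
              omega
            · rw [Finset.erase_eq_of_notMem hwn]
              omega
          have hc3 : ((G.neighborFinset v ∩ S').card : ℝ) + 1 ≥ (deg G v : ℝ) := by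
            have := Finset.card_le_card hsub2
            rw [deg_eq_card]
            exact_mod_cast le_trans hcard2 (by omega)
          have := hTge1 v
          linarith
        have hS'U : S' ≠ Finset.univ := by
          intro h
          have : w ∈ S' := h ▸ Finset.mem_univ w
          exact (Finset.mem_erase.mp this).1 rfl
        refine ⟨S', hS'ne, hS'U, generic_D G L k S' hch_glob ?_⟩
        exact viol_D G L k hk hLmin hnd hEHall S' hS'bad hS'vio
      · refine ⟨S, hSne, hSU, generic_D G L k S hch_glob ?_⟩
        exact viol_D G L k hk hLmin hnd hEHall S hSbad hSvio
    · -- everything is saved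
      left
      refine ⟨fun v => (le_min_iff.mp (hLmin v)).2, fun v => ⟨?_, (le_min_iff.mp (hLmin v)).1⟩,
        fun a b => h a < h b, sto_of_inj h hinj, ?_⟩
      · -- list size lower bound
        have hS2 := (noEH_facts G L k v hk (hLmin v) (hEHall v)).2.1
        rw [SaveR, he'] at *
        rw [he] at hS2 ⊢
        linarith
      · intro v
        by_cases hgood : GoodV G L k v
        · rcases hgood with hab | heg
          · exact Or.inl hab
          · exact Or.inr (Or.inr (Or.inl heg))
        · have hvB : v ∈ Bad := by
            rw [hBad, Finset.mem_filter]
            exact ⟨Finset.mem_univ v, hgood⟩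
          have := hprio v hvB
          right; right; right; right
          rw [Prioritized]
          exact this
  · -- some vertex is extremely heavy
    push_neg at hEHall
    obtain ⟨v₀, hv₀⟩ := hEHall
    classical
    set D0 : Finset V := Finset.univ.filter
      (fun v => 9 * eps0 * (deg G v : ℝ) ≤ chR G L eps0 k v) with hD0
    have hv₀D : v₀ ∈ D0 := by
      rw [hD0, Finset.mem_filter]
      exact ⟨Finset.mem_univ v₀, hv₀⟩
    have hD0ne : D0.Nonempty := ⟨v₀, hv₀D⟩
    by_cases hU : D0 = Finset.univ
    · -- impossible: total charge would be positive
      exfalso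
      have hpos : ∀ v : V, 0 < chR G L eps0 k v := by
        intro v
        have hvD : v ∈ D0 := hU ▸ Finset.mem_univ v
        rw [hD0, Finset.mem_filter] at hvD
        have hch := hvD.2
        rcases Nat.eq_zero_or_pos (deg G v) with hd0 | hd1
        · -- degree zero
          have hl0 : (L v).card = 0 := by
            have := hLmin v
            omega
          have hω : omegaAt G v = 1 := by
            have h1 := one_le_omegaAt G v
            have h2 := omegaAt_le G v
            omega
          rw [chR, SaveR, GapR, hd0, hl0, hω]
          have hk1 : (1:ℝ) ≤ (k:ℝ) := by exact_mod_cast hk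
          rw [he]
          norm_num
          nlinarith [hlgt0]
        · have : (0:ℝ) < 9 * eps0 * (deg G v : ℝ) := by
            have : (1:ℝ) ≤ (deg G v : ℝ) := by exact_mod_cast hd1
            nlinarith
          linarith
      have : 0 < ∑ v, chR G L eps0 k v :=
        Finset.sum_pos (fun v _ => hpos v) ⟨v₀, Finset.mem_univ v₀⟩
      linarith
    · right
      refine ⟨D0, hD0ne, hU, generic_D G L k D0 hch_glob ?_⟩
      have hpt : ∀ u ∈ D0, 9 * eps0 * ((G.neighborFinset u \ D0).card : ℝ)
          ≤ chR G L eps0 k u := by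
        intro u hu
        rw [hD0, Finset.mem_filter] at hu
        have h1 : ((G.neighborFinset u \ D0).card : ℝ) ≤ (deg G u : ℝ) := by
          rw [deg_eq_card]
          exact_mod_cast Finset.card_le_card (Finset.sdiff_subset)
        have := hu.2
        nlinarith
      calc 9 * eps0 * ∑ u ∈ D0, ((G.neighborFinset u \ D0).card : ℝ)
          = ∑ u ∈ D0, 9 * eps0 * ((G.neighborFinset u \ D0).card : ℝ) := Finset.mul_sum _ _ _
        _ ≤ ∑ u ∈ D0, chR G L eps0 k u := Finset.sum_le_sum hpt


end KP
end
end

section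
/- Let k ≥ 2 be an integer and let G be a finite simple graph with list-assignment L such that |L(v)| ≤ min{d(v), k} for every vertex v and Σ_{v∈V(G)}(Save_L(v) + ε·log^10 k) ≤ Σ_{v∈V(G)}(2ε·Gap(v) − 7ε(k − |L(v)|)). If u ∈ V(G) is extremely heavy, then Σ_{v∈V(G)∖{u}}(Save_L(v) + ε·log^10 k) ≤ Σ_{v∈V(G)∖{u}}(2ε·Gap_{G−u}(v) − 7ε(k − |L(v)| + |N(v) ∩ {u}|)), where Gap_{G−u}(v) = d_{G−u}(v) + 1 − ω_{G−u}(v) is computed in the induced subgraph G − u while Save_L(v) and N(v) are computed in G. -/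
open scoped Classical

noncomputable section

namespace KP

variable {V : Type} [Fintype V]

lemma degOn_compl_singleton (G : SimpleGraph V) (u v : V) :
    degOn G (({u} : Set V)ᶜ) v + (G.neighborSet v ∩ ({u} : Set V)).ncard
      = deg G v := by
  have h := Set.ncard_inter_add_ncard_diff_eq_ncard (G.neighborSet v) ({u} : Set V)
    (Set.toFinite _)
  have h2 : G.neighborSet v ∩ ({u} : Set V)ᶜ = G.neighborSet v \ ({u} : Set V) := by
    rw [Set.diff_eq]
  rw [degOn, deg, h2]
  omega

lemma ncard_inter_singleton (G : SimpleGraph V) (u v : V) :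
    (G.neighborSet v ∩ ({u} : Set V)).ncard = if G.Adj v u then 1 else 0 := by
  by_cases h : G.Adj v u
  · have : G.neighborSet v ∩ ({u} : Set V) = {u} := by
      ext x
      simp only [Set.mem_inter_iff, Set.mem_singleton_iff, SimpleGraph.mem_neighborSet]
      constructor
      · rintro ⟨-, rfl⟩; rfl
      · rintro rfl; exact ⟨h, rfl⟩
    simp [this, h]
  · have : G.neighborSet v ∩ ({u} : Set V) = ∅ := by
      ext x
      simp only [Set.mem_inter_iff, Set.mem_singleton_iff, SimpleGraph.mem_neighborSet,
        Set.mem_empty_iff_false, iff_false, not_and]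
      rintro hx rfl; exact h hx
    simp [this, h]

lemma sum_ncard_inter_singleton (G : SimpleGraph V) (u : V) :
    ∑ v ∈ Finset.univ \ {u}, (G.neighborSet v ∩ ({u} : Set V)).ncard = deg G u := by
  have h1 : ∑ v ∈ Finset.univ \ {u}, (G.neighborSet v ∩ ({u} : Set V)).ncard
      = ∑ v, (G.neighborSet v ∩ ({u} : Set V)).ncard := by
    apply Finset.sum_subset (Finset.sdiff_subset)
    intro x _ hx
    have hxu : x = u := by simpa using hx
    subst hxu
    rw [ncard_inter_singleton]
    simp
  rw [h1]
  have h2 : ∀ v, (G.neighborSet v ∩ ({u} : Set V)).ncard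
      = if G.Adj u v then 1 else 0 := by
    intro v
    rw [ncard_inter_singleton, G.adj_comm]
  simp only [h2]
  rw [← Finset.card_filter]
  have h3 : Finset.univ.filter (fun v => G.Adj u v) = G.neighborFinset u := by
    ext x; simp
  rw [h3, deg, Set.ncard_eq_toFinset_card']
  rfl

theorem stmt6 (ε : ℝ) (hε : 0 < ε ∧ ε < 1) (k : ℕ) (hk : 2 ≤ k)
    {V : Type} [Fintype V] (G : SimpleGraph V) (L : V → Finset ℕ)
    (hLmin : ∀ v, (L v).card ≤ min (deg G v) k)
    (hsum : (∑ v, (SaveR G L v + ε * logTen k)) ≤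
      ∑ v, (2 * ε * GapR G v - 7 * ε * ((k : ℝ) - ((L v).card : ℝ))))
    (u : V) (hu : ExtremelyHeavy G L ε k u) :
    (∑ v ∈ Finset.univ \ {u}, (SaveR G L v + ε * logTen k)) ≤
      ∑ v ∈ Finset.univ \ {u}, (2 * ε * GapOnR G (({u} : Set V)ᶜ) v -
        7 * ε * ((k : ℝ) - ((L v).card : ℝ) +
          ((G.neighborSet v ∩ ({u} : Set V)).ncard : ℝ))) := by
  obtain ⟨hε0, hε1⟩ := hε
  have hkey : ∀ v ∈ Finset.univ \ ({u} : Finset V),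
      2 * ε * GapR G v - 7 * ε * ((k : ℝ) - ((L v).card : ℝ))
        - 9 * ε * ((G.neighborSet v ∩ ({u} : Set V)).ncard : ℝ)
      ≤ 2 * ε * GapOnR G (({u} : Set V)ᶜ) v -
        7 * ε * ((k : ℝ) - ((L v).card : ℝ) +
          ((G.neighborSet v ∩ ({u} : Set V)).ncard : ℝ)) := by
    intro v hv
    have hd := degOn_compl_singleton G u v
    have hω := omegaAtOn_le_omegaAt G (({u} : Set V)ᶜ) v
    have hgap : GapR G v - ((G.neighborSet v ∩ ({u} : Set V)).ncard : ℝ)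
        ≤ GapOnR G (({u} : Set V)ᶜ) v := by
      have hd' : (degOn G (({u} : Set V)ᶜ) v : ℝ)
            + ((G.neighborSet v ∩ ({u} : Set V)).ncard : ℝ) = (deg G v : ℝ) := by
        exact_mod_cast congrArg (Nat.cast : ℕ → ℝ) hd
      have hω' : (omegaAtOn G (({u} : Set V)ᶜ) v : ℝ) ≤ (omegaAt G v : ℝ) := by
        exact_mod_cast hω
      unfold GapR GapOnR
      linarith
    have h2 := mul_le_mul_of_nonneg_left hgap (by positivity : (0:ℝ) ≤ 2 * ε)
    have hε0' : (0:ℝ) ≤ ε := le_of_lt hε0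
    nlinarith [Nat.card_coe_set_eq (G.neighborSet v ∩ ({u} : Set V))]
  have hsumle := Finset.sum_le_sum hkey
  have hds : ∑ v ∈ Finset.univ \ {u},
      ((G.neighborSet v ∩ ({u} : Set V)).ncard : ℝ) = (deg G u : ℝ) := by
    rw [← Nat.cast_sum, sum_ncard_inter_singleton]
  have hsplit : ∀ f : V → ℝ, ∑ v ∈ Finset.univ \ ({u} : Finset V), f v
      = (∑ v, f v) - f u := by
    intro f
    have := Finset.sum_sdiff (Finset.subset_univ ({u} : Finset V)) (f := f)
    rw [Finset.sum_singleton] at this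
    linarith
  rw [Finset.sum_sub_distrib, Finset.sum_sub_distrib] at hsumle
  have h9 : ∑ v ∈ Finset.univ \ ({u} : Finset V),
      9 * ε * ((G.neighborSet v ∩ ({u} : Set V)).ncard : ℝ)
      = 9 * ε * (deg G u : ℝ) := by
    rw [← Finset.mul_sum, hds]
  have hA : ∑ v ∈ Finset.univ \ ({u} : Finset V),
      (2 * ε * GapR G v - 7 * ε * ((k : ℝ) - ((L v).card : ℝ)))
      = (∑ v, (2 * ε * GapR G v - 7 * ε * ((k : ℝ) - ((L v).card : ℝ))))
        - (2 * ε * GapR G u - 7 * ε * ((k : ℝ) - ((L u).card : ℝ))) :=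
    hsplit _
  have hB : ∑ v ∈ Finset.univ \ ({u} : Finset V), (SaveR G L v + ε * logTen k)
      = (∑ v, (SaveR G L v + ε * logTen k)) - (SaveR G L u + ε * logTen k) :=
    hsplit _
  have hC : ∑ v ∈ Finset.univ \ ({u} : Finset V),
      (2 * ε * GapR G v - 7 * ε * ((k : ℝ) - ((L v).card : ℝ)))
      = (∑ v ∈ Finset.univ \ ({u} : Finset V), 2 * ε * GapR G v)
        - ∑ v ∈ Finset.univ \ ({u} : Finset V),
            7 * ε * ((k : ℝ) - ((L v).card : ℝ)) :=
    Finset.sum_sub_distrib _ _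
  have hch : SaveR G L u - 2 * ε * GapR G u + ε * logTen k
      + 7 * ε * ((k : ℝ) - ((L u).card : ℝ)) ≥ 9 * ε * (deg G u : ℝ) := hu
  linarith


end KP
end
end

section
/- Assume the standing assumptions, and assume α ≤ (δ(2 + ε') − 4ε')/(4 − 3δ). Let v be a vertex of G and let u ∈ N(v) be very lordly with ω(u) ≥ (1 − δ/4)·d(v) + 1. Then u ∈ Lord(v), that is, |L(u)| ≥ (1 + α)·|L(v)|. -/
open scoped Classical

noncomputable section

namespace KP

variable {V : Type} [Fintype V]

set_option maxHeartbeats 2000000 in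
theorem stmt19 (ε : ℝ) (hε : 0 < ε ∧ ε < 1) (α δ : ℝ) (hα : 0 < α ∧ α < 1) (hδ : 0 < δ ∧ δ < 1) (k : ℕ)
    {V : Type} [Fintype V] (G : SimpleGraph V) (L : V → Finset ℕ)
    (hk : 2 ≤ k)
    (hLmin : ∀ v, (L v).card ≤ min (deg G v) k)
    (hsum : (∑ v, (SaveR G L v + ε * logTen k)) ≤
      ∑ v, (2 * ε * GapR G v - 7 * ε * ((k : ℝ) - ((L v).card : ℝ))))
    (hdense : ∀ T : Finset V, ¬ DenseWrt G L T)
    (hxheavy : ∀ v, ¬ ExtremelyHeavy G L ε k v)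
    (hαc : α ≤ (δ * (2 + 11 * ε) - 4 * (11 * ε)) / (4 - 3 * δ))
    (v u : V) (hu : u ∈ G.neighborSet v) (hVL : VeryLordly G L δ u)
    (hω : ((omegaAt G u : ℝ)) ≥ (1 - δ / 4) * (deg G v : ℝ) + 1) :
    u ∈ Lord G L α v := by
  have hadj : G.Adj v u := hu
  set du : ℝ := (deg G u : ℝ) with hdu_def
  set dv : ℝ := (deg G v : ℝ) with hdv_def
  set lu : ℝ := ((L u).card : ℝ) with hlu_def
  set lv : ℝ := ((L v).card : ℝ) with hlv_def
  set wu : ℝ := (omegaAt G u : ℝ) with hwu_def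
  have hdu0 : 0 ≤ du := Nat.cast_nonneg _
  have hdv0 : 0 ≤ dv := Nat.cast_nonneg _
  -- list size bounds
  have hLu := hLmin u
  have hLv := hLmin v
  have hluk : lu ≤ (k : ℝ) := by
    rw [hlu_def]; exact_mod_cast (le_trans hLu (min_le_right _ _))
  have hludu : lu ≤ du := by
    rw [hlu_def, hdu_def]; exact_mod_cast (le_trans hLu (min_le_left _ _))
  have hlvdv : lv ≤ dv := by
    rw [hlv_def, hdv_def]; exact_mod_cast (le_trans hLv (min_le_left _ _))
  -- not extremely heavy
  have hch : du + 1 - lu - 2 * ε * (du + 1 - wu) + ε * logTen k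
      + 7 * ε * ((k : ℝ) - lu) < 9 * ε * du := by
    have h := hxheavy u
    unfold ExtremelyHeavy chR SaveR GapR at h
    push_neg at h
    linarith [h]
  have hlog : 0 ≤ logTen k := by unfold logTen; positivity
  -- very lordly gap bound
  have hgap : du + 1 - wu ≥ 3 * δ / 4 * du := by
    have := hVL.1
    unfold GapR at this
    linarith [this]
  have hw : wu ≥ (1 - δ / 4) * dv + 1 := hω
  clear_value du dv lu lv wu
  clear hsum hdense hxheavy hLmin hLu hLv hVL hω hu hk
  have hw1 : (1 : ℝ) ≤ wu := by nlinarith [mul_nonneg (by linarith [hδ.2] : (0:ℝ) ≤ 1 - δ / 4) hdv0]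
  -- Save(u) < 11 ε d(u), i.e. lu > (1-11ε) du + 1
  have hlu_big : (1 - 11 * ε) * du + 1 < lu := by
    nlinarith [mul_nonneg hε.1.le (by linarith : (0:ℝ) ≤ (k : ℝ) - lu),
      mul_nonneg hε.1.le hlog,
      mul_nonneg hε.1.le (by linarith : (0:ℝ) ≤ wu - 1)]
  -- degree comparison
  have hdudv : (4 - δ) * dv ≤ (4 - 3 * δ) * du := by linarith
  -- ε is small
  have h43 : (0:ℝ) < 4 - 3 * δ := by linarith [hδ.2]
  have hαc' : α * (4 - 3 * δ) ≤ δ * (2 + 11 * ε) - 4 * (11 * ε) :=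
    (le_div_iff₀ h43).mp hαc
  clear hαc
  have hεs : 11 * ε < 1 := by
    nlinarith [mul_pos hα.1 h43,
      mul_nonneg (by linarith [hδ.2] : (0:ℝ) ≤ 1 - δ) hε.1.le]
  -- conclude
  have hkey : (1 + α) * dv ≤ (1 - 11 * ε) * du := by
    have hco : (1 + α) * (4 - 3 * δ) ≤ (1 - 11 * ε) * (4 - δ) := by nlinarith [hαc']
    have h1 : (1 + α) * (4 - 3 * δ) * dv ≤ (1 - 11 * ε) * (4 - δ) * dv :=
      mul_le_mul_of_nonneg_right hco hdv0
    have h2 : (1 - 11 * ε) * ((4 - δ) * dv) ≤ (1 - 11 * ε) * ((4 - 3 * δ) * du) :=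
      mul_le_mul_of_nonneg_left hdudv (by linarith)
    have h4 : (4 - 3 * δ) * ((1 + α) * dv) ≤ (4 - 3 * δ) * ((1 - 11 * ε) * du) := by
      nlinarith [h1, h2]
    exact le_of_mul_le_mul_left h4 h43
  have hfinal : (1 + α) * lv ≤ lu := by
    have : (1 + α) * lv ≤ (1 + α) * dv :=
      mul_le_mul_of_nonneg_left hlvdv (by linarith [hα.1])
    linarith
  rw [hlu_def, hlv_def] at hfinal
  exact ⟨hadj, hfinal⟩

end KP
end
end
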